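/- arXiv:1505.01232 — 9 statements merged into one kernel-verified Lean document; each statement's English description precedes it below -/
import Mathlib

section
/- Let K be a field, A and B unital associative K-algebras, and χ : A ⊗ B → B ⊗ A a K-linear map satisfying: (i) χ(1⊗b) = b⊗1 and χ(a⊗1) = 1⊗a for all a,b; (ii) χ∘(μ_A⊗id_B) = (id_B⊗μ_A)∘(χ⊗id_A)∘(id_A⊗χ); (iii) χ∘(id_A⊗μ_B) = (μ_B⊗id_A)∘(id_B⊗χ)∘(χ⊗id_B). Then the multiplication μ_χ := (μ_B⊗μ_A)∘(id_B⊗χ⊗id_A) makes B⊗A into an associative unital K-algebra with unit 1⊗1. -/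
open TensorProduct LinearMap

variable (K : Type*)

def IsTwistingMap {A B : Type*} [Field K] [Ring A] [Ring B] [Algebra K A] [Algebra K B]
    (χ : A ⊗[K] B →ₗ[K] B ⊗[K] A) : Prop :=
  (∀ b : B, χ ((1 : A) ⊗ₜ[K] b) = b ⊗ₜ[K] (1 : A)) ∧
  (∀ a : A, χ (a ⊗ₜ[K] (1 : B)) = (1 : B) ⊗ₜ[K] a) ∧
  (∀ (a a' : A) (b : B),
    χ ((a * a') ⊗ₜ[K] b) =
      lTensor B (mul' K A)
        (TensorProduct.assoc K B A A
          (rTensor A χ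
            ((TensorProduct.assoc K A B A).symm (a ⊗ₜ[K] χ (a' ⊗ₜ[K] b)))))) ∧
  (∀ (a : A) (b b' : B),
    χ (a ⊗ₜ[K] (b * b')) =
      rTensor A (mul' K B)
        ((TensorProduct.assoc K B B A).symm
          (lTensor B χ
            (TensorProduct.assoc K B A B (χ (a ⊗ₜ[K] b) ⊗ₜ[K] b')))))

noncomputable def twistMul {A B : Type*} [Field K] [Ring A] [Ring B] [Algebra K A] [Algebra K B]
    (χ : A ⊗[K] B →ₗ[K] B ⊗[K] A) :
    (B ⊗[K] A) ⊗[K] (B ⊗[K] A) →ₗ[K] B ⊗[K] A :=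
  TensorProduct.map (mul' K B) (mul' K A)
    ∘ₗ (TensorProduct.assoc K B B (A ⊗[K] A)).symm.toLinearMap
    ∘ₗ lTensor B (TensorProduct.assoc K B A A).toLinearMap
    ∘ₗ lTensor B (rTensor A χ)
    ∘ₗ lTensor B (TensorProduct.assoc K A B A).symm.toLinearMap
    ∘ₗ (TensorProduct.assoc K B A (B ⊗[K] A)).toLinearMap

/-!
Write `x ⋆ y` for `twistMul K χ (x ⊗ₜ y)`. On pure tensors
`(b ⊗ a) ⋆ (b' ⊗ a') = (b · ⊗ · a') (χ (a ⊗ b'))`, so `⋆` commutes with left multiplication on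
the `B`-factor of its left argument and with right multiplication on the `A`-factor of its right
argument. In this language conditions (ii) and (iii) read `χ (a a' ⊗ b) = (1 ⊗ a) ⋆ χ (a' ⊗ b)` and
`χ (a ⊗ b b') = χ (a ⊗ b) ⋆ (b' ⊗ 1)`, and with them both bracketings of
`(b₁ ⊗ a₁) ⋆ (b₂ ⊗ a₂) ⋆ (b₃ ⊗ a₃)` reduce to `(b₁ · ⊗ · a₃) (χ (a₁ ⊗ b₂) ⋆ χ (a₂ ⊗ b₃))`.
The unit laws are condition (i).
-/

section

variable {A B : Type*} [Field K] [Ring A] [Ring B] [Algebra K A] [Algebra K B]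
  (χ : A ⊗[K] B →ₗ[K] B ⊗[K] A)

theorem twistMul_tmul_tmul (b b' : B) (a a' : A) :
    twistMul K χ ((b ⊗ₜ a) ⊗ₜ (b' ⊗ₜ a')) = map (mulLeft K b) (mulRight K a') (χ (a ⊗ₜ b')) := by
  simp only [twistMul, coe_comp, Function.comp_apply, LinearEquiv.coe_coe,
    assoc_tmul, lTensor_tmul, assoc_symm_tmul, rTensor_tmul]
  induction χ (a ⊗ₜ b') with
  | zero => simp
  | add u v hu hv => simp only [add_tmul, tmul_add, map_add, hu, hv]
  | tmul c d => simp [mul'_apply]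

theorem twistMul_rTensor_mulLeft_tmul (b : B) (x y : B ⊗[K] A) :
    twistMul K χ (rTensor A (mulLeft K b) x ⊗ₜ y) =
      rTensor A (mulLeft K b) (twistMul K χ (x ⊗ₜ y)) := by
  induction x with
  | zero => simp
  | add u v hu hv => simp only [map_add, add_tmul, hu, hv]
  | tmul c d =>
    induction y with
    | zero => simp
    | add u v hu hv => simp only [map_add, tmul_add, hu, hv]
    | tmul e f =>
      rw [rTensor_tmul, mulLeft_apply, twistMul_tmul_tmul, twistMul_tmul_tmul, mulLeft_mul,
        ← rTensor_comp_map, comp_apply]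

theorem twistMul_tmul_lTensor_mulRight (a : A) (x y : B ⊗[K] A) :
    twistMul K χ (x ⊗ₜ lTensor B (mulRight K a) y) =
      lTensor B (mulRight K a) (twistMul K χ (x ⊗ₜ y)) := by
  induction x with
  | zero => simp
  | add u v hu hv => simp only [map_add, add_tmul, hu, hv]
  | tmul c d =>
    induction y with
    | zero => simp
    | add u v hu hv => simp only [map_add, tmul_add, hu, hv]
    | tmul e f =>
      rw [lTensor_tmul, mulRight_apply, twistMul_tmul_tmul, twistMul_tmul_tmul, mulRight_mul,
        ← lTensor_comp_map, comp_apply]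

theorem twistMul_one_tmul_tmul (a : A) (y : B ⊗[K] A) :
    twistMul K χ (((1 : B) ⊗ₜ a) ⊗ₜ y) =
      lTensor B (mul' K A) (TensorProduct.assoc K B A A
        (rTensor A χ ((TensorProduct.assoc K A B A).symm (a ⊗ₜ y)))) := by
  induction y with
  | zero => simp
  | add u v hu hv => simp only [map_add, tmul_add, hu, hv]
  | tmul e f =>
    rw [twistMul_tmul_tmul, mulLeft_one, assoc_symm_tmul, rTensor_tmul]
    induction χ (a ⊗ₜ e) with
    | zero => simp
    | add u v hu hv => simp only [map_add, add_tmul, hu, hv]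
    | tmul g h => simp [mul'_apply]

theorem twistMul_tmul_tmul_one (x : B ⊗[K] A) (b : B) :
    twistMul K χ (x ⊗ₜ (b ⊗ₜ (1 : A))) =
      rTensor A (mul' K B) ((TensorProduct.assoc K B B A).symm
        (lTensor B χ (TensorProduct.assoc K B A B (x ⊗ₜ b)))) := by
  induction x with
  | zero => simp
  | add u v hu hv => simp only [map_add, add_tmul, hu, hv]
  | tmul c d =>
    rw [twistMul_tmul_tmul, mulRight_one, assoc_tmul, lTensor_tmul]
    induction χ (d ⊗ₜ b) with
    | zero => simp
    | add u v hu hv => simp only [map_add, tmul_add, hu, hv]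
    | tmul g h => simp [mul'_apply]

theorem twistMul_lTensor_mulRight_tmul_tmul_one
    (h : ∀ (a a' : A) (b : B), χ ((a * a') ⊗ₜ b) = twistMul K χ (((1 : B) ⊗ₜ a) ⊗ₜ χ (a' ⊗ₜ b)))
    (a : A) (b : B) (x : B ⊗[K] A) :
    twistMul K χ (lTensor B (mulRight K a) x ⊗ₜ (b ⊗ₜ (1 : A))) =
      twistMul K χ (x ⊗ₜ χ (a ⊗ₜ b)) := by
  induction x with
  | zero => simp
  | add u v hu hv => simp only [map_add, add_tmul, hu, hv]
  | tmul c d =>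
    calc twistMul K χ ((c ⊗ₜ (d * a)) ⊗ₜ (b ⊗ₜ (1 : A)))
        = rTensor A (mulLeft K c) (χ ((d * a) ⊗ₜ b)) := by
          rw [twistMul_tmul_tmul, mulRight_one]; rfl
      _ = rTensor A (mulLeft K c) (twistMul K χ (((1 : B) ⊗ₜ d) ⊗ₜ χ (a ⊗ₜ b))) := by
          rw [h]
      _ = twistMul K χ ((c ⊗ₜ d) ⊗ₜ χ (a ⊗ₜ b)) := by
          rw [← twistMul_rTensor_mulLeft_tmul, rTensor_tmul, mulLeft_apply, mul_one]

theorem twistMul_one_tmul_tmul_rTensor_mulLeft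
    (h : ∀ (a : A) (b b' : B), χ (a ⊗ₜ (b * b')) = twistMul K χ (χ (a ⊗ₜ b) ⊗ₜ (b' ⊗ₜ (1 : A))))
    (a : A) (b : B) (y : B ⊗[K] A) :
    twistMul K χ (((1 : B) ⊗ₜ a) ⊗ₜ rTensor A (mulLeft K b) y) =
      twistMul K χ (χ (a ⊗ₜ b) ⊗ₜ y) := by
  induction y with
  | zero => simp
  | add u v hu hv => simp only [map_add, tmul_add, hu, hv]
  | tmul e f =>
    calc twistMul K χ (((1 : B) ⊗ₜ a) ⊗ₜ ((b * e) ⊗ₜ f))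
        = lTensor B (mulRight K f) (χ (a ⊗ₜ (b * e))) := by
          rw [twistMul_tmul_tmul, mulLeft_one]; rfl
      _ = lTensor B (mulRight K f) (twistMul K χ (χ (a ⊗ₜ b) ⊗ₜ (e ⊗ₜ (1 : A)))) := by
          rw [h]
      _ = twistMul K χ (χ (a ⊗ₜ b) ⊗ₜ (e ⊗ₜ f)) := by
          rw [← twistMul_tmul_lTensor_mulRight, lTensor_tmul, mulRight_apply, one_mul]

theorem twistMul_twistMul_tmul
    (h : ∀ (a a' : A) (b : B), χ ((a * a') ⊗ₜ b) = twistMul K χ (((1 : B) ⊗ₜ a) ⊗ₜ χ (a' ⊗ₜ b)))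
    (b₁ b₂ b₃ : B) (a₁ a₂ a₃ : A) :
    twistMul K χ (twistMul K χ ((b₁ ⊗ₜ a₁) ⊗ₜ (b₂ ⊗ₜ a₂)) ⊗ₜ (b₃ ⊗ₜ a₃)) =
      map (mulLeft K b₁) (mulRight K a₃) (twistMul K χ (χ (a₁ ⊗ₜ b₂) ⊗ₜ χ (a₂ ⊗ₜ b₃))) := by
  calc twistMul K χ (twistMul K χ ((b₁ ⊗ₜ a₁) ⊗ₜ (b₂ ⊗ₜ a₂)) ⊗ₜ (b₃ ⊗ₜ a₃))
      = twistMul K χ (rTensor A (mulLeft K b₁) (lTensor B (mulRight K a₂) (χ (a₁ ⊗ₜ b₂))) ⊗ₜ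
          lTensor B (mulRight K a₃) (b₃ ⊗ₜ (1 : A))) := by
        rw [twistMul_tmul_tmul, ← rTensor_comp_lTensor, comp_apply, lTensor_tmul, mulRight_apply,
          one_mul]
    _ = map (mulLeft K b₁) (mulRight K a₃)
          (twistMul K χ (lTensor B (mulRight K a₂) (χ (a₁ ⊗ₜ b₂)) ⊗ₜ (b₃ ⊗ₜ (1 : A)))) := by
        rw [twistMul_rTensor_mulLeft_tmul, twistMul_tmul_lTensor_mulRight, ← rTensor_comp_lTensor,
          comp_apply]
    _ = _ := by rw [twistMul_lTensor_mulRight_tmul_tmul_one K χ h]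

theorem twistMul_tmul_twistMul
    (h : ∀ (a : A) (b b' : B), χ (a ⊗ₜ (b * b')) = twistMul K χ (χ (a ⊗ₜ b) ⊗ₜ (b' ⊗ₜ (1 : A))))
    (b₁ b₂ b₃ : B) (a₁ a₂ a₃ : A) :
    twistMul K χ ((b₁ ⊗ₜ a₁) ⊗ₜ twistMul K χ ((b₂ ⊗ₜ a₂) ⊗ₜ (b₃ ⊗ₜ a₃))) =
      map (mulLeft K b₁) (mulRight K a₃) (twistMul K χ (χ (a₁ ⊗ₜ b₂) ⊗ₜ χ (a₂ ⊗ₜ b₃))) := by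
  calc twistMul K χ ((b₁ ⊗ₜ a₁) ⊗ₜ twistMul K χ ((b₂ ⊗ₜ a₂) ⊗ₜ (b₃ ⊗ₜ a₃)))
      = twistMul K χ (rTensor A (mulLeft K b₁) ((1 : B) ⊗ₜ a₁) ⊗ₜ
          lTensor B (mulRight K a₃) (rTensor A (mulLeft K b₂) (χ (a₂ ⊗ₜ b₃)))) := by
        rw [twistMul_tmul_tmul, ← lTensor_comp_rTensor, comp_apply, rTensor_tmul, mulLeft_apply,
          mul_one]
    _ = map (mulLeft K b₁) (mulRight K a₃)
          (twistMul K χ (((1 : B) ⊗ₜ a₁) ⊗ₜ rTensor A (mulLeft K b₂) (χ (a₂ ⊗ₜ b₃)))) := by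
        rw [twistMul_rTensor_mulLeft_tmul, twistMul_tmul_lTensor_mulRight, ← rTensor_comp_lTensor,
          comp_apply]
    _ = _ := by rw [twistMul_one_tmul_tmul_rTensor_mulLeft K χ h]

theorem twistMul_assoc
    (h₁ : ∀ (a a' : A) (b : B), χ ((a * a') ⊗ₜ b) = twistMul K χ (((1 : B) ⊗ₜ a) ⊗ₜ χ (a' ⊗ₜ b)))
    (h₂ : ∀ (a : A) (b b' : B), χ (a ⊗ₜ (b * b')) = twistMul K χ (χ (a ⊗ₜ b) ⊗ₜ (b' ⊗ₜ (1 : A))))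
    (x y z : B ⊗[K] A) :
    twistMul K χ (twistMul K χ (x ⊗ₜ y) ⊗ₜ z) = twistMul K χ (x ⊗ₜ twistMul K χ (y ⊗ₜ z)) := by
  induction x with
  | zero => simp
  | add u v hu hv => simp only [add_tmul, map_add, hu, hv]
  | tmul b₁ a₁ =>
    induction y with
    | zero => simp
    | add u v hu hv => simp only [add_tmul, tmul_add, map_add, hu, hv]
    | tmul b₂ a₂ =>
      induction z with
      | zero => simp
      | add u v hu hv => simp only [tmul_add, map_add, hu, hv]
      | tmul b₃ a₃ => rw [twistMul_twistMul_tmul K χ h₁, twistMul_tmul_twistMul K χ h₂]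

theorem twistMul_one_left (h : ∀ b : B, χ ((1 : A) ⊗ₜ b) = b ⊗ₜ (1 : A)) (x : B ⊗[K] A) :
    twistMul K χ (((1 : B) ⊗ₜ (1 : A)) ⊗ₜ x) = x := by
  induction x with
  | zero => simp
  | add u v hu hv => simp only [tmul_add, map_add, hu, hv]
  | tmul b a => simp [twistMul_tmul_tmul, h]

theorem twistMul_one_right (h : ∀ a : A, χ (a ⊗ₜ (1 : B)) = (1 : B) ⊗ₜ a) (x : B ⊗[K] A) :
    twistMul K χ (x ⊗ₜ ((1 : B) ⊗ₜ (1 : A))) = x := by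
  induction x with
  | zero => simp
  | add u v hu hv => simp only [add_tmul, map_add, hu, hv]
  | tmul b a => simp [twistMul_tmul_tmul, h]

end

theorem twistMul_assoc_one {A B : Type*} [Field K] [Ring A] [Ring B] [Algebra K A] [Algebra K B]
    (χ : A ⊗[K] B →ₗ[K] B ⊗[K] A) (hχ : IsTwistingMap K χ) :
    (∀ x y z : B ⊗[K] A,
        twistMul K χ (twistMul K χ (x ⊗ₜ[K] y) ⊗ₜ[K] z) =
          twistMul K χ (x ⊗ₜ[K] twistMul K χ (y ⊗ₜ[K] z))) ∧
    (∀ x : B ⊗[K] A, twistMul K χ (((1 : B) ⊗ₜ[K] (1 : A)) ⊗ₜ[K] x) = x) ∧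
    (∀ x : B ⊗[K] A, twistMul K χ (x ⊗ₜ[K] ((1 : B) ⊗ₜ[K] (1 : A))) = x) := by
  obtain ⟨h_one_tmul, h_tmul_one, h_mul_tmul, h_tmul_mul⟩ := hχ
  have h₁ : ∀ (a a' : A) (b : B),
      χ ((a * a') ⊗ₜ b) = twistMul K χ (((1 : B) ⊗ₜ a) ⊗ₜ χ (a' ⊗ₜ b)) := fun a a' b => by
    rw [h_mul_tmul, twistMul_one_tmul_tmul]
  have h₂ : ∀ (a : A) (b b' : B),
      χ (a ⊗ₜ (b * b')) = twistMul K χ (χ (a ⊗ₜ b) ⊗ₜ (b' ⊗ₜ (1 : A))) := fun a b b' => by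
    rw [h_tmul_mul, twistMul_tmul_tmul_one]
  exact ⟨twistMul_assoc K χ h₁ h₂, twistMul_one_left K χ h_one_tmul,
    twistMul_one_right K χ h_tmul_one⟩
end

section
/- Let B⊗_χ A be a twisted tensor product and C an algebra. Given algebra homomorphisms φ : A → C and ψ : B → C, there exists an algebra homomorphism Ψ : B⊗_χ A → C with Ψ∘i_A = φ and Ψ∘i_B = ψ if and only if μ_C∘(φ⊗ψ) = μ_C∘(ψ⊗φ)∘χ; moreover such Ψ is unique. -/
open TensorProduct LinearMap

variable (K : Type*)

/-! The product `(b ⊗ a)(b' ⊗ a') = b χ(a ⊗ b') a'` shows that `b ⊗ a = (b ⊗ 1)(1 ⊗ a)`, so a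
multiplicative `Ψ` extending `φ` and `ψ` must be `b ⊗ a ↦ ψ b * φ a`. This map sends the product
to `ψ b * μ_C((ψ ⊗ φ)(χ(a ⊗ b'))) * φ a'`, so it is multiplicative exactly when
`μ_C ∘ (ψ ⊗ φ) ∘ χ` agrees with `a ⊗ b ↦ φ a * ψ b`. -/

section

variable {K} {A B C : Type*} [Field K] [Ring A] [Ring B] [Ring C]
  [Algebra K A] [Algebra K B] [Algebra K C]

lemma twistMul_tmul (χ : A ⊗[K] B →ₗ[K] B ⊗[K] A) (b : B) (a : A) (b' : B) (a' : A) :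
    twistMul K χ ((b ⊗ₜ[K] a) ⊗ₜ[K] (b' ⊗ₜ[K] a')) =
      TensorProduct.map (mulLeft K b) (mulRight K a') (χ (a ⊗ₜ[K] b')) := by
  simp only [twistMul, comp_apply, LinearEquiv.coe_coe, assoc_tmul, assoc_symm_tmul,
    lTensor_tmul, rTensor_tmul]
  induction χ (a ⊗ₜ[K] b') using TensorProduct.induction_on with
  | zero => simp
  | tmul p q => simp
  | add s t hs ht => simp only [add_tmul, tmul_add, map_add, hs, ht]

lemma twistMul_tmul_one_one {χ : A ⊗[K] B →ₗ[K] B ⊗[K] A}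
    (hχ : χ ((1 : A) ⊗ₜ[K] (1 : B)) = (1 : B) ⊗ₜ[K] (1 : A)) (b : B) (a : A) :
    twistMul K χ ((b ⊗ₜ[K] (1 : A)) ⊗ₜ[K] ((1 : B) ⊗ₜ[K] a)) = b ⊗ₜ[K] a := by
  simp [twistMul_tmul, hχ]

noncomputable def tensorMulMap (ψ : B →ₐ[K] C) (φ : A →ₐ[K] C) : B ⊗[K] A →ₗ[K] C :=
  mul' K C ∘ₗ TensorProduct.map ψ.toLinearMap φ.toLinearMap

@[simp]
lemma tensorMulMap_tmul (ψ : B →ₐ[K] C) (φ : A →ₐ[K] C) (b : B) (a : A) :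
    tensorMulMap ψ φ (b ⊗ₜ[K] a) = ψ b * φ a := by
  simp [tensorMulMap]

lemma tensorMulMap_map_mulLeft_mulRight (ψ : B →ₐ[K] C) (φ : A →ₐ[K] C) (b : B) (a : A)
    (t : B ⊗[K] A) :
    tensorMulMap ψ φ (TensorProduct.map (mulLeft K b) (mulRight K a) t) =
      ψ b * tensorMulMap ψ φ t * φ a := by
  induction t using TensorProduct.induction_on with
  | zero => simp
  | tmul p q => simp [mul_assoc]
  | add s t hs ht => simp only [map_add, hs, ht, mul_add, add_mul]

lemma tensorMulMap_twistMul_tmul (χ : A ⊗[K] B →ₗ[K] B ⊗[K] A) (ψ : B →ₐ[K] C)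
    (φ : A →ₐ[K] C) (b : B) (a : A) (b' : B) (a' : A) :
    tensorMulMap ψ φ (twistMul K χ ((b ⊗ₜ[K] a) ⊗ₜ[K] (b' ⊗ₜ[K] a'))) =
      ψ b * tensorMulMap ψ φ (χ (a ⊗ₜ[K] b')) * φ a' := by
  rw [twistMul_tmul, tensorMulMap_map_mulLeft_mulRight]

lemma tensorMulMap_twistMul_iff (χ : A ⊗[K] B →ₗ[K] B ⊗[K] A) (ψ : B →ₐ[K] C)
    (φ : A →ₐ[K] C) :
    (∀ x y : B ⊗[K] A,
        tensorMulMap ψ φ (twistMul K χ (x ⊗ₜ[K] y)) = tensorMulMap ψ φ x * tensorMulMap ψ φ y) ↔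
      ∀ (a : A) (b : B), φ a * ψ b = tensorMulMap ψ φ (χ (a ⊗ₜ[K] b)) := by
  constructor
  · intro hmul a b
    simpa [tensorMulMap_twistMul_tmul] using (hmul (1 ⊗ₜ[K] a) (b ⊗ₜ[K] 1)).symm
  · intro hC x y
    induction x using TensorProduct.induction_on with
    | zero => simp
    | add s t hs ht => simp only [add_tmul, map_add, hs, ht, add_mul]
    | tmul b a =>
      induction y using TensorProduct.induction_on with
      | zero => simp
      | add s t hs ht => simp only [tmul_add, map_add, hs, ht, mul_add]
      | tmul b' a' => simp only [tensorMulMap_twistMul_tmul, tensorMulMap_tmul, ← hC, mul_assoc]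

lemma eq_tensorMulMap {χ : A ⊗[K] B →ₗ[K] B ⊗[K] A}
    (hχ : χ ((1 : A) ⊗ₜ[K] (1 : B)) = (1 : B) ⊗ₜ[K] (1 : A)) {ψ : B →ₐ[K] C} {φ : A →ₐ[K] C}
    {Ψ : B ⊗[K] A →ₗ[K] C} (hmul : ∀ x y : B ⊗[K] A, Ψ (twistMul K χ (x ⊗ₜ[K] y)) = Ψ x * Ψ y)
    (hA : ∀ a : A, Ψ ((1 : B) ⊗ₜ[K] a) = φ a) (hB : ∀ b : B, Ψ (b ⊗ₜ[K] (1 : A)) = ψ b) :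
    Ψ = tensorMulMap ψ φ :=
  TensorProduct.ext' fun b a =>
    calc Ψ (b ⊗ₜ[K] a) = Ψ (twistMul K χ ((b ⊗ₜ[K] 1) ⊗ₜ[K] (1 ⊗ₜ[K] a))) := by
          rw [twistMul_tmul_one_one hχ]
      _ = tensorMulMap ψ φ (b ⊗ₜ[K] a) := by rw [hmul, hA, hB, tensorMulMap_tmul]

end

theorem twisted_tensor_universal_property {A B C : Type*} [Field K] [Ring A] [Ring B] [Ring C]
    [Algebra K A] [Algebra K B] [Algebra K C]
    (χ : A ⊗[K] B →ₗ[K] B ⊗[K] A) (hχ : IsTwistingMap K χ)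
    (φ : A →ₐ[K] C) (ψ : B →ₐ[K] C) :
    (∃! Ψ : B ⊗[K] A →ₗ[K] C,
        (∀ x y : B ⊗[K] A, Ψ (twistMul K χ (x ⊗ₜ[K] y)) = Ψ x * Ψ y) ∧
        Ψ ((1 : B) ⊗ₜ[K] (1 : A)) = 1 ∧
        (∀ a : A, Ψ ((1 : B) ⊗ₜ[K] a) = φ a) ∧
        (∀ b : B, Ψ (b ⊗ₜ[K] (1 : A)) = ψ b)) ↔
      ∀ (a : A) (b : B),
        φ a * ψ b = mul' K C (TensorProduct.map ψ.toLinearMap φ.toLinearMap (χ (a ⊗ₜ[K] b))) := by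
  have hχ₁ : χ ((1 : A) ⊗ₜ[K] (1 : B)) = (1 : B) ⊗ₜ[K] (1 : A) := hχ.1 1
  refine ⟨?_, fun hC => ?_⟩
  · rintro ⟨Ψ, ⟨hmul, -, hA, hB⟩, -⟩
    rw [eq_tensorMulMap hχ₁ hmul hA hB] at hmul
    exact (tensorMulMap_twistMul_iff χ ψ φ).1 hmul
  · refine ⟨tensorMulMap ψ φ, ⟨(tensorMulMap_twistMul_iff χ ψ φ).2 hC, by simp, by simp, by simp⟩,
      fun Ψ ⟨hmul, _, hA, hB⟩ => eq_tensorMulMap hχ₁ hmul hA hB⟩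
end

section
/- Let B have basis {b_1,…,b_n} and let χ : A⊗B → B⊗A be given by χ(a⊗b_i) = Σ_j b_j ⊗ γ_i^j(a) for K-linear maps γ_i^j : A → A. Then χ is a twisting map if and only if: (1) γ_i^j(1) = δ_{ij}·1; (2) γ_i^k(aa') = Σ_j γ_j^k(a)γ_i^j(a') for all a,a'; (3) α_k·id_A = Σ_i α_i γ_i^k where 1_B = Σ_i α_i b_i; (4) Σ_k λ^k_{ij} γ_k^m = Σ_k Σ_l λ^m_{kl} (γ^l_j ∘ γ^k_i) for all i,j,m. -/
open TensorProduct LinearMap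

variable (K : Type*)

/-! Each axiom of a twisting map is linear in its `B`-arguments, so it suffices to check it on
basis vectors `b i` (for the unit axiom of `A`, expand `1 = ∑ α i • b i` instead). There both
sides are sums `∑ j, b j ⊗ₜ (…)`, and since `b` is a basis, their `A`-coefficients must agree;
comparing coefficients gives exactly the four conditions on the `γ i j`. -/

theorem Module.Basis.sum_tmul_eq_sum_tmul_iff {R M N ι : Type*} [CommSemiring R]
    [AddCommMonoid M] [Module R M] [AddCommMonoid N] [Module R N] [Fintype ι]
    (b : Module.Basis ι R M) {x y : ι → N} : ∑ i, b i ⊗ₜ[R] x i = ∑ i, b i ⊗ₜ[R] y i ↔ x = y := by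
  refine ⟨fun h => funext fun j => ?_, fun h => h ▸ rfl⟩
  classical
  simpa [Finsupp.single_apply] using congr(TensorProduct.lid R N (rTensor N (b.coord j) $h))

section

variable {K} {A B ι : Type*} [CommSemiring K] [Semiring A] [Semiring B] [Algebra K A] [Algebra K B]
  [Fintype ι] {b : Module.Basis ι K B} {χ : A ⊗[K] B →ₗ[K] B ⊗[K] A}
  {γ : ι → ι → A →ₗ[K] A}

theorem twist_one_tmul_iff [DecidableEq ι]
    (hχ : ∀ (a : A) (i : ι), χ (a ⊗ₜ[K] b i) = ∑ j, b j ⊗ₜ[K] γ i j a) :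
    (∀ y : B, χ ((1 : A) ⊗ₜ[K] y) = y ⊗ₜ[K] (1 : A)) ↔
      ∀ i j, γ i j (1 : A) = if i = j then 1 else 0 := by
  have basis_tmul_one (i : ι) :
      b i ⊗ₜ[K] (1 : A) = ∑ j, b j ⊗ₜ[K] (if i = j then (1 : A) else 0) := by
    simp [tmul_ite]
  constructor
  · intro h i
    have := h (b i)
    rw [hχ, basis_tmul_one, b.sum_tmul_eq_sum_tmul_iff] at this
    exact congrFun this
  · intro h y
    refine LinearMap.congr_fun
      (b.ext (f₁ := χ ∘ₗ mk K A B 1) (f₂ := (mk K B A).flip 1) fun i => ?_) y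
    simp only [comp_apply, mk_apply, flip_apply, hχ, basis_tmul_one, h]

theorem twist_tmul_one_iff {α : ι → K} (hα : (1 : B) = ∑ i, α i • b i)
    (hχ : ∀ (a : A) (i : ι), χ (a ⊗ₜ[K] b i) = ∑ j, b j ⊗ₜ[K] γ i j a) :
    (∀ a : A, χ (a ⊗ₜ[K] (1 : B)) = (1 : B) ⊗ₜ[K] a) ↔
      ∀ k (a : A), α k • a = ∑ i, α i • γ i k a := by
  have twist_tmul_one (a : A) :
      χ (a ⊗ₜ[K] (1 : B)) = ∑ k, b k ⊗ₜ[K] ∑ i, α i • γ i k a := by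
    rw [hα]
    simp only [tmul_sum, tmul_smul, map_sum, map_smul, hχ, smul_tmul']
    rw [Finset.sum_comm]
  have one_tmul (a : A) : (1 : B) ⊗ₜ[K] a = ∑ k, b k ⊗ₜ[K] (α k • a) := by
    simp only [hα, sum_tmul, smul_tmul]
  simp only [twist_tmul_one, one_tmul, b.sum_tmul_eq_sum_tmul_iff, funext_iff, eq_comm]
  exact forall_comm

theorem twist_mul_tmul_iff
    (hχ : ∀ (a : A) (i : ι), χ (a ⊗ₜ[K] b i) = ∑ j, b j ⊗ₜ[K] γ i j a) :
    (∀ (a a' : A) (y : B),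
      χ ((a * a') ⊗ₜ[K] y) =
        lTensor B (mul' K A)
          (TensorProduct.assoc K B A A
            (rTensor A χ ((TensorProduct.assoc K A B A).symm (a ⊗ₜ[K] χ (a' ⊗ₜ[K] y)))))) ↔
      ∀ i k (a a' : A), γ i k (a * a') = ∑ j, γ j k a * γ i j a' := by
  have twist_twist_basis (a a' : A) (i : ι) :
      lTensor B (mul' K A)
          (TensorProduct.assoc K B A A
            (rTensor A χ ((TensorProduct.assoc K A B A).symm (a ⊗ₜ[K] χ (a' ⊗ₜ[K] b i))))) =
        ∑ k, b k ⊗ₜ[K] ∑ j, γ j k a * γ i j a' := by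
    simp only [hχ, tmul_sum, map_sum, assoc_symm_tmul, rTensor_tmul, sum_tmul, assoc_tmul,
      lTensor_tmul, mul'_apply]
    exact Finset.sum_comm
  constructor
  · intro h i k a a'
    have := h a a' (b i)
    rw [hχ, twist_twist_basis, b.sum_tmul_eq_sum_tmul_iff] at this
    exact congrFun this k
  · intro h a a' y
    refine LinearMap.congr_fun (b.ext (f₁ := χ ∘ₗ mk K A B (a * a'))
      (f₂ := lTensor B (mul' K A) ∘ₗ (TensorProduct.assoc K B A A).toLinearMap ∘ₗ
        rTensor A χ ∘ₗ (TensorProduct.assoc K A B A).symm.toLinearMap ∘ₗ mk K A (B ⊗[K] A) a ∘ₗ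
        χ ∘ₗ mk K A B a') fun i => ?_) y
    simp only [comp_apply, mk_apply, LinearEquiv.coe_coe]
    rw [twist_twist_basis, hχ]
    simp only [h]

theorem twist_tmul_mul_iff {lam : ι → ι → ι → K}
    (hlam : ∀ i j, b i * b j = ∑ k, lam i j k • b k)
    (hχ : ∀ (a : A) (i : ι), χ (a ⊗ₜ[K] b i) = ∑ j, b j ⊗ₜ[K] γ i j a) :
    (∀ (a : A) (y y' : B),
      χ (a ⊗ₜ[K] (y * y')) =
        rTensor A (mul' K B)
          ((TensorProduct.assoc K B B A).symm
            (lTensor B χ (TensorProduct.assoc K B A B (χ (a ⊗ₜ[K] y) ⊗ₜ[K] y'))))) ↔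
      ∀ i j m (a : A),
        ∑ k, lam i j k • γ k m a = ∑ k, ∑ l, lam k l m • γ j l (γ i k a) := by
  have twist_basis_mul (a : A) (i j : ι) :
      χ (a ⊗ₜ[K] (b i * b j)) = ∑ m, b m ⊗ₜ[K] ∑ k, lam i j k • γ k m a := by
    simp only [hlam, tmul_sum, tmul_smul, map_sum, map_smul, hχ, Finset.smul_sum]
    exact Finset.sum_comm
  have twist_twist_basis (a : A) (i j : ι) :
      rTensor A (mul' K B)
          ((TensorProduct.assoc K B B A).symm
            (lTensor B χ (TensorProduct.assoc K B A B (χ (a ⊗ₜ[K] b i) ⊗ₜ[K] b j)))) =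
        ∑ m, b m ⊗ₜ[K] ∑ k, ∑ l, lam k l m • γ j l (γ i k a) := by
    simp only [hχ, sum_tmul, map_sum, assoc_tmul, lTensor_tmul, tmul_sum, assoc_symm_tmul,
      rTensor_tmul, mul'_apply, hlam, smul_tmul]
    calc _ = ∑ k, ∑ m, ∑ l, b m ⊗ₜ[K] (lam k l m • γ j l (γ i k a)) :=
          Finset.sum_congr rfl fun k _ => Finset.sum_comm
      _ = _ := Finset.sum_comm
  constructor
  · intro h i j m a
    have := h a (b i) (b j)
    rw [twist_basis_mul, twist_twist_basis, b.sum_tmul_eq_sum_tmul_iff] at this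
    exact congrFun this m
  · intro h a y y'
    refine LinearMap.congr_fun₂ (LinearMap.ext_basis b b
      (B := (LinearMap.mul K B).compr₂ (χ ∘ₗ mk K A B a))
      (B' := (mk K (B ⊗[K] A) B).compr₂ (rTensor A (mul' K B) ∘ₗ
        (TensorProduct.assoc K B B A).symm.toLinearMap ∘ₗ lTensor B χ ∘ₗ
        (TensorProduct.assoc K B A B).toLinearMap) ∘ₗ χ ∘ₗ mk K A B a) fun i j => ?_) y y'
    simp only [compr₂_apply, comp_apply, mul_apply', mk_apply, LinearEquiv.coe_coe,
      twist_basis_mul, twist_twist_basis, h]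

end

theorem twisting_map_iff_gamma_conditions {A B : Type*} [Field K] [Ring A] [Ring B]
    [Algebra K A] [Algebra K B] {n : ℕ}
    (b : Module.Basis (Fin n) K B) (lam : Fin n → Fin n → Fin n → K)
    (hlam : ∀ i j : Fin n, b i * b j = ∑ k : Fin n, lam i j k • b k)
    (α : Fin n → K) (hα : (1 : B) = ∑ i : Fin n, α i • b i)
    (χ : A ⊗[K] B →ₗ[K] B ⊗[K] A) (γ : Fin n → Fin n → (A →ₗ[K] A))
    (hχ : ∀ (a : A) (i : Fin n), χ (a ⊗ₜ[K] b i) = ∑ j : Fin n, b j ⊗ₜ[K] γ i j a) :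
    IsTwistingMap K χ ↔
      ((∀ i j : Fin n, γ i j (1 : A) = if i = j then 1 else 0) ∧
       (∀ (i k : Fin n) (a a' : A), γ i k (a * a') = ∑ j : Fin n, γ j k a * γ i j a') ∧
       (∀ (k : Fin n) (a : A), α k • a = ∑ i : Fin n, α i • γ i k a) ∧
       (∀ (i j m : Fin n) (a : A),
          ∑ k : Fin n, lam i j k • γ k m a =
            ∑ k : Fin n, ∑ l : Fin n, lam k l m • γ j l (γ i k a))) := by
  rw [IsTwistingMap, twist_one_tmul_iff hχ, twist_tmul_one_iff hα hχ, twist_mul_tmul_iff hχ,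
    twist_tmul_mul_iff hlam hχ]
  exact and_congr_right' and_left_comm
end

section
/- Let P(X) = X² − αX + β ∈ K[X] and B = K[X]/⟨P(X)⟩, and let χ : A⊗B → B⊗A be given by χ(a⊗1) = 1⊗a and χ(a⊗X) = 1⊗δ(a) + X⊗f(a). Then χ is a twisting map if and only if f is a K-algebra endomorphism, δ satisfies δ(ab) = aδ(b) + δ(a)f(b) with f(1)=1, and the identities δ² − αδ + β·id = β·f² and f∘δ + δ∘f = α(f − f²) hold. -/
open TensorProduct LinearMap

variable (K : Type*)

/-- The algebra `K[X]/⟨X² - αX + β⟩`. -/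
abbrev QDup (K : Type*) [Field K] (α β : K) : Type _ :=
  Polynomial K ⧸
    Ideal.span {(Polynomial.X : Polynomial K) ^ 2 - Polynomial.C α * Polynomial.X +
      Polynomial.C β}

/-- The class of `X` in `K[X]/⟨X² - αX + β⟩`. -/
noncomputable def QDup.x (K : Type*) [Field K] (α β : K) : QDup K α β :=
  Ideal.Quotient.mk _ Polynomial.X

/-!
`QDup K α β` has the power basis `1, x` with `x * x = α • x - β • 1`, so every element of
`QDup K α β ⊗ A` is uniquely `1 ⊗ a₀ + x ⊗ a₁`. Each axiom of a twisting map is linear in its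
`QDup`-arguments, so it suffices to check it on `1` and `x`; given `χ (a ⊗ 1) = 1 ⊗ a`, the
instances involving `1` hold for free. Comparing the coefficients of `1` and `x` in the three
remaining instances `χ (1 ⊗ x)`, `χ (a a' ⊗ x)` and `χ (a ⊗ x * x)` gives, in turn,
`δ 1 = 0 ∧ f 1 = 1`, the twisted Leibniz rule together with multiplicativity of `f`, and the two
quadratic identities. Finally `δ 1 = 0` is itself a consequence of the Leibniz rule and `f 1 = 1`.
-/

namespace QDup

open Polynomial

variable {K} [Field K] {α β : K}

theorem monic_quadratic (α β : K) : (X ^ 2 - C α * X + C β : K[X]).Monic := by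
  monicity!

noncomputable def powerBasis (α β : K) : PowerBasis K (QDup K α β) :=
  AdjoinRoot.powerBasis' (monic_quadratic α β)

theorem powerBasis_dim : (powerBasis α β).dim = 2 := by
  rw [powerBasis, AdjoinRoot.powerBasis'_dim]
  compute_degree!

noncomputable def basis (α β : K) : Module.Basis (Fin 2) K (QDup K α β) :=
  (powerBasis α β).basis.reindex (finCongr powerBasis_dim)

theorem basis_apply (i : Fin 2) : basis α β i = QDup.x K α β ^ (i : ℕ) := by
  rw [basis, Module.Basis.reindex_apply, PowerBasis.basis_eq_pow]
  rfl

theorem basis_zero : basis α β 0 = 1 := by simp [basis_apply]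

theorem basis_one : basis α β 1 = QDup.x K α β := by simp [basis_apply]

@[simp]
theorem basis_repr_one : (basis α β).repr 1 = Finsupp.single 0 1 := by
  rw [← basis_zero, Module.Basis.repr_self]

@[simp]
theorem basis_repr_x : (basis α β).repr (QDup.x K α β) = Finsupp.single 1 1 := by
  rw [← basis_one, Module.Basis.repr_self]

theorem x_mul_x : QDup.x K α β * QDup.x K α β = α • QDup.x K α β - β • 1 := by
  rw [← sub_eq_zero]
  change Ideal.Quotient.mkₐ K _ (X * X - (α • X - β • 1)) = 0
  rw [Ideal.Quotient.mkₐ_eq_mk, Ideal.Quotient.eq_zero_iff_mem, Ideal.mem_span_singleton]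
  exact dvd_of_eq (by simp only [smul_eq_C_mul]; ring)

theorem linearMap_ext {M : Type*} [AddCommMonoid M] [Module K M] {g h : QDup K α β →ₗ[K] M}
    (h1 : g 1 = h 1) (hx : g (QDup.x K α β) = h (QDup.x K α β)) : g = h :=
  (basis α β).ext (Fin.forall_fin_two.2 ⟨by rwa [basis_zero], by rwa [basis_one]⟩)

theorem forall_eq_iff_of_one {M : Type*} [AddCommMonoid M] [Module K M]
    (g h : QDup K α β →ₗ[K] M) (h1 : g 1 = h 1) :
    (∀ b, g b = h b) ↔ g (QDup.x K α β) = h (QDup.x K α β) :=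
  ⟨fun H => H _, fun hx => LinearMap.ext_iff.1 (linearMap_ext h1 hx)⟩

theorem forall₂_eq_iff_of_one {M : Type*} [AddCommMonoid M] [Module K M]
    (g h : QDup K α β →ₗ[K] QDup K α β →ₗ[K] M) (h1 : ∀ b, g 1 b = h 1 b)
    (h1' : ∀ b, g b 1 = h b 1) :
    (∀ b b', g b b' = h b b') ↔
      g (QDup.x K α β) (QDup.x K α β) = h (QDup.x K α β) (QDup.x K α β) :=
  ⟨fun H => H _ _, fun hxx => LinearMap.ext_iff₂.1 <|
    linearMap_ext (LinearMap.ext h1) (linearMap_ext (h1' _) hxx)⟩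

theorem tensor_ext_iff {A : Type*} [AddCommGroup A] [Module K A] {t t' : QDup K α β ⊗[K] A} :
    t = t' ↔
      equivFinsuppOfBasisLeft (basis α β) t 0 = equivFinsuppOfBasisLeft (basis α β) t' 0 ∧
      equivFinsuppOfBasisLeft (basis α β) t 1 = equivFinsuppOfBasisLeft (basis α β) t' 1 := by
  rw [← (equivFinsuppOfBasisLeft (basis α β)).injective.eq_iff, Finsupp.ext_iff,
    Fin.forall_fin_two]

end QDup

section UnitLaws

variable {K} [Field K] {A B : Type*} [Ring A] [Ring B] [Algebra K A] [Algebra K B]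

theorem rTensor_mul'_assoc_symm_one_tmul (t : B ⊗[K] A) :
    rTensor A (mul' K B) ((TensorProduct.assoc K B B A).symm ((1 : B) ⊗ₜ[K] t)) = t := by
  induction t using TensorProduct.induction_on with
  | zero => simp
  | tmul b a => simp
  | add t t' ht ht' => simp [tmul_add, ht, ht']

theorem rTensor_mul'_assoc_symm_lTensor_tmul_one {χ : A ⊗[K] B →ₗ[K] B ⊗[K] A}
    (hχ1 : ∀ a : A, χ (a ⊗ₜ[K] (1 : B)) = (1 : B) ⊗ₜ[K] a) (t : B ⊗[K] A) :
    rTensor A (mul' K B) ((TensorProduct.assoc K B B A).symm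
      (lTensor B χ (TensorProduct.assoc K B A B (t ⊗ₜ[K] (1 : B))))) = t := by
  induction t using TensorProduct.induction_on with
  | zero => simp
  | tmul b a => simp [hχ1]
  | add t t' ht ht' => simp [add_tmul, ht, ht']

end UnitLaws

theorem map_one_eq_zero_of_leibniz {R : Type*} [Ring R] {δ f : R → R} (hf1 : f 1 = 1)
    (hδ : ∀ a b : R, δ (a * b) = a * δ b + δ a * f b) : δ 1 = 0 := by
  simpa [hf1] using hδ 1 1

section Twisting

variable {K} [Field K] {A : Type*} [Ring A] [Algebra K A] {α β : K}
  {χ : A ⊗[K] QDup K α β →ₗ[K] QDup K α β ⊗[K] A} {δ f : A →ₗ[K] A}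

theorem twist_one_left_iff
    (hχ1 : ∀ a : A, χ (a ⊗ₜ[K] (1 : QDup K α β)) = (1 : QDup K α β) ⊗ₜ[K] a)
    (hχX : ∀ a : A,
      χ (a ⊗ₜ[K] QDup.x K α β) = (1 : QDup K α β) ⊗ₜ[K] δ a + QDup.x K α β ⊗ₜ[K] f a) :
    (∀ b : QDup K α β, χ ((1 : A) ⊗ₜ[K] b) = b ⊗ₜ[K] (1 : A)) ↔ δ 1 = 0 ∧ f 1 = 1 := by
  refine (QDup.forall_eq_iff_of_one (χ ∘ₗ TensorProduct.mk K A _ 1)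
    ((TensorProduct.mk K _ A).flip 1) (hχ1 1)).trans ?_
  simp [QDup.tensor_ext_iff, hχX]

theorem twist_mul_left_iff
    (hχ1 : ∀ a : A, χ (a ⊗ₜ[K] (1 : QDup K α β)) = (1 : QDup K α β) ⊗ₜ[K] a)
    (hχX : ∀ a : A,
      χ (a ⊗ₜ[K] QDup.x K α β) = (1 : QDup K α β) ⊗ₜ[K] δ a + QDup.x K α β ⊗ₜ[K] f a) :
    (∀ (a a' : A) (b : QDup K α β),
      χ ((a * a') ⊗ₜ[K] b) =
        lTensor _ (mul' K A)
          (TensorProduct.assoc K _ A A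
            (rTensor A χ ((TensorProduct.assoc K A _ A).symm (a ⊗ₜ[K] χ (a' ⊗ₜ[K] b)))))) ↔
    ∀ a a' : A, δ (a * a') = a * δ a' + δ a * f a' ∧ f (a * a') = f a * f a' := by
  refine forall₂_congr fun a a' => (QDup.forall_eq_iff_of_one
    (χ ∘ₗ TensorProduct.mk K A _ (a * a'))
    (lTensor _ (mul' K A) ∘ₗ (TensorProduct.assoc K _ A A).toLinearMap ∘ₗ rTensor A χ ∘ₗ
      (TensorProduct.assoc K A _ A).symm.toLinearMap ∘ₗ TensorProduct.mk K A _ a ∘ₗ χ ∘ₗ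
      TensorProduct.mk K A _ a')
    (by simp [hχ1])).trans ?_
  simp [QDup.tensor_ext_iff, hχX, hχ1, tmul_add, add_tmul]

theorem twist_mul_right_iff
    (hχ1 : ∀ a : A, χ (a ⊗ₜ[K] (1 : QDup K α β)) = (1 : QDup K α β) ⊗ₜ[K] a)
    (hχX : ∀ a : A,
      χ (a ⊗ₜ[K] QDup.x K α β) = (1 : QDup K α β) ⊗ₜ[K] δ a + QDup.x K α β ⊗ₜ[K] f a) :
    (∀ (a : A) (b b' : QDup K α β),
      χ (a ⊗ₜ[K] (b * b')) =
        rTensor A (mul' K _)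
          ((TensorProduct.assoc K _ _ A).symm
            (lTensor _ χ (TensorProduct.assoc K _ A _ (χ (a ⊗ₜ[K] b) ⊗ₜ[K] b'))))) ↔
    ∀ a : A, δ (δ a) - α • δ a + β • a = β • f (f a) ∧
      f (δ a) + δ (f a) = α • (f a - f (f a)) := by
  refine forall_congr' fun a => (QDup.forall₂_eq_iff_of_one
    ((LinearMap.mul K _).compr₂ (χ ∘ₗ TensorProduct.mk K A _ a))
    ((TensorProduct.mk K _ _ ∘ₗ χ ∘ₗ TensorProduct.mk K A _ a).compr₂
      (rTensor A (mul' K _) ∘ₗ (TensorProduct.assoc K _ _ A).symm.toLinearMap ∘ₗ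
        lTensor _ χ ∘ₗ (TensorProduct.assoc K _ A _).toLinearMap))
    (by simp [hχ1, rTensor_mul'_assoc_symm_one_tmul])
    (by simp [rTensor_mul'_assoc_symm_lTensor_tmul_one hχ1])).trans ?_
  trans α • δ a - β • a = δ (δ a) + -(β • f (f a)) ∧ α • f a = f (δ a) + (δ (f a) + α • f (f a))
  · simp [QDup.x_mul_x, QDup.tensor_ext_iff, hχX, hχ1, tmul_add, tmul_sub, sub_tmul]
  · refine and_congr ?_ ?_ <;> constructor <;> intro h <;> linear_combination (norm := module) -h

end Twisting

theorem quantum_duplicate_twisting {A : Type*} [Field K] [Ring A] [Algebra K A] (α β : K)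
    (χ : A ⊗[K] QDup K α β →ₗ[K] QDup K α β ⊗[K] A) (δ f : A →ₗ[K] A)
    (hχ1 : ∀ a : A, χ (a ⊗ₜ[K] (1 : QDup K α β)) = (1 : QDup K α β) ⊗ₜ[K] a)
    (hχX : ∀ a : A,
      χ (a ⊗ₜ[K] QDup.x K α β) = (1 : QDup K α β) ⊗ₜ[K] δ a + QDup.x K α β ⊗ₜ[K] f a) :
    IsTwistingMap K χ ↔
      (f 1 = 1 ∧ (∀ a b : A, f (a * b) = f a * f b)) ∧
      (∀ a b : A, δ (a * b) = a * δ b + δ a * f b) ∧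
      (∀ a : A, δ (δ a) - α • δ a + β • a = β • f (f a)) ∧
      (∀ a : A, f (δ a) + δ (f a) = α • (f a - f (f a))) := by
  rw [IsTwistingMap, twist_one_left_iff hχ1 hχX, twist_mul_left_iff hχ1 hχX,
    twist_mul_right_iff hχ1 hχX]
  simp only [hχ1, implies_true, true_and, forall_and]
  constructor
  · rintro ⟨⟨-, hf1⟩, ⟨hδ, hf⟩, hq⟩
    exact ⟨⟨hf1, hf⟩, hδ, hq⟩
  · rintro ⟨⟨hf1, hf⟩, hδ, hq⟩
    exact ⟨⟨map_one_eq_zero_of_leibniz hf1 hδ, hf1⟩, ⟨hδ, hf⟩, hq⟩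
end

section
/- Let B = Kⁿ with canonical idempotent basis {e_1,…,e_n}, and let χ : A⊗Kⁿ → Kⁿ⊗A be given by χ(a⊗e_i) = Σ_j e_j ⊗ γ_i^j(a) for linear maps γ_i^j : A → A. Then χ is a twisting map if and only if: (1) γ_i^p ∘ γ_j^p = δ_{ij} γ_i^p for all i,j,p; (2) Σ_{j=1}^n γ_j^i = id_A for each i; (3) γ_j^i(ab) = Σ_p γ_p^i(a) γ_j^p(b) for all a,b and all i,j; (4) γ_j^i(1) = δ_{ij}·1. -/
/-!
The axioms of a twisting map `χ : A ⊗ Kⁿ → Kⁿ ⊗ A` that involve elements of `Kⁿ` are linear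
(resp. bilinear) in them, so they only need to be checked on the idempotents `eᵢ`. There both
sides become sums `∑ⱼ eⱼ ⊗ xⱼ`, and these are equal iff their coefficients are, because
`Kⁿ ⊗ A ≅ Aⁿ`. Comparing coefficients, `χ (1 ⊗ eᵢ) = eᵢ ⊗ 1` is (4), `χ (a ⊗ 1) = 1 ⊗ a` is (2)
since `1 = ∑ᵢ eᵢ`, compatibility with the product of `A` is (3), and compatibility with
`eᵢ eⱼ = δᵢⱼ eᵢ` is (1).
-/

open TensorProduct LinearMap

variable (K : Type*)

section

variable {K} [CommSemiring K] {A : Type*} [Semiring A] [Algebra K A] {ι : Type*} [DecidableEq ι]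

theorem single_one_mul_single_one (i j : ι) :
    (Pi.single i 1 : ι → K) * Pi.single j 1 = if i = j then Pi.single i 1 else 0 := by
  split_ifs with h
  · rw [h, ← Pi.single_mul, one_mul]
  · ext k; by_cases hk : k = i <;> simp_all [Pi.single_apply]

variable [Fintype ι]

theorem sum_single_tmul_injective :
    Function.Injective fun x : ι → A => ∑ j, (Pi.single j (1 : K) : ι → K) ⊗ₜ[K] x j := by
  intro x y h
  have := congrArg ((TensorProduct.comm K _ A).trans (piScalarRight K K A ι)) h
  funext k
  simpa [piScalarRight_apply, Pi.single_apply] using congrFun this k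

theorem forall_eq_iff_forall_single {M : Type*} [AddCommMonoid M] [Module K M]
    (f g : (ι → K) →ₗ[K] M) :
    (∀ b, f b = g b) ↔ ∀ i, f (Pi.single i 1) = g (Pi.single i 1) :=
  ⟨fun h i => h _, fun h => LinearMap.ext_iff.mp <|
    (Pi.basisFun K ι).ext fun i => by simpa using h i⟩

theorem forall_eq_iff_forall_single₂ {M : Type*} [AddCommMonoid M] [Module K M]
    (f g : (ι → K) →ₗ[K] (ι → K) →ₗ[K] M) :
    (∀ b b', f b b' = g b b') ↔
      ∀ i j, f (Pi.single i 1) (Pi.single j 1) = g (Pi.single i 1) (Pi.single j 1) :=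
  ⟨fun h i j => h _ _, fun h => LinearMap.ext_iff₂.mp <|
    LinearMap.ext_basis (Pi.basisFun K ι) (Pi.basisFun K ι) fun i j => by simpa using h i j⟩

theorem sum_single_tmul_eq_single_tmul_iff (x : ι → A) (i : ι) (y : A) :
    ∑ j, (Pi.single j 1 : ι → K) ⊗ₜ[K] x j = Pi.single i 1 ⊗ₜ y ↔ x = Pi.single i y := by
  have : (Pi.single i 1 : ι → K) ⊗ₜ[K] y = ∑ j, Pi.single j 1 ⊗ₜ Pi.single i y j := by
    simp [Pi.single_apply, tmul_ite]
  rw [this, sum_single_tmul_injective.eq_iff]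

theorem one_tmul_eq_sum_single_tmul (x : A) :
    (1 : ι → K) ⊗ₜ[K] x = ∑ j, Pi.single j 1 ⊗ₜ x := by
  rw [← sum_tmul, ← Finset.univ_sum_single (1 : ι → K)]
  rfl

def HasComponents (χ : A ⊗[K] (ι → K) →ₗ[K] (ι → K) ⊗[K] A) (γ : ι → ι → A →ₗ[K] A) : Prop :=
  ∀ a i, χ (a ⊗ₜ Pi.single i 1) = ∑ j, Pi.single j 1 ⊗ₜ γ i j a

namespace HasComponents

variable {χ : A ⊗[K] (ι → K) →ₗ[K] (ι → K) ⊗[K] A} {γ : ι → ι → A →ₗ[K] A}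

theorem apply_tmul_single (hχ : HasComponents χ γ) (a : A) (i : ι) :
    χ (a ⊗ₜ Pi.single i 1) = ∑ j, Pi.single j 1 ⊗ₜ γ i j a :=
  hχ a i

theorem apply_tmul_one (hχ : HasComponents χ γ) (a : A) :
    χ (a ⊗ₜ 1) = ∑ j, Pi.single j 1 ⊗ₜ ∑ i, γ i j a := by
  rw [← Finset.univ_sum_single (1 : ι → K)]
  simp only [Pi.one_apply, tmul_sum, map_sum, hχ.apply_tmul_single]
  exact Finset.sum_comm

theorem tmul_one_iff (hχ : HasComponents χ γ) :
    (∀ a, χ (a ⊗ₜ 1) = 1 ⊗ₜ a) ↔ ∀ i a, ∑ j, γ j i a = a := by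
  simp only [hχ.apply_tmul_one, one_tmul_eq_sum_single_tmul, sum_single_tmul_injective.eq_iff,
    funext_iff]
  exact forall_comm

theorem one_tmul_iff (hχ : HasComponents χ γ) :
    (∀ b, χ (1 ⊗ₜ b) = b ⊗ₜ 1) ↔ ∀ i j, γ j i 1 = if i = j then 1 else 0 := by
  have hlin :=
    forall_eq_iff_forall_single (χ ∘ₗ TensorProduct.mk K A _ 1) ((TensorProduct.mk K _ A).flip 1)
  simp only [coe_comp, Function.comp_apply, mk_apply, flip_apply] at hlin
  simp only [hlin, hχ.apply_tmul_single, sum_single_tmul_eq_single_tmul_iff, funext_iff,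
    Pi.single_apply]
  exact forall_comm

theorem mul_tmul_iff (hχ : HasComponents χ γ) :
    (∀ (a a' : A) (b : ι → K), χ ((a * a') ⊗ₜ[K] b) =
      lTensor (ι → K) (mul' K A)
        (TensorProduct.assoc K (ι → K) A A
          (rTensor A χ ((TensorProduct.assoc K A (ι → K) A).symm (a ⊗ₜ[K] χ (a' ⊗ₜ[K] b)))))) ↔
    ∀ i j a b, γ j i (a * b) = ∑ p, γ p i a * γ j p b := by
  have hlin := fun a a' : A => forall_eq_iff_forall_single (χ ∘ₗ TensorProduct.mk K A _ (a * a'))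
    (lTensor (ι → K) (mul' K A) ∘ₗ (TensorProduct.assoc K (ι → K) A A).toLinearMap ∘ₗ
      rTensor A χ ∘ₗ (TensorProduct.assoc K A (ι → K) A).symm.toLinearMap ∘ₗ
      TensorProduct.mk K A _ a ∘ₗ χ ∘ₗ TensorProduct.mk K A _ a')
  simp only [coe_comp, Function.comp_apply, mk_apply, LinearEquiv.coe_coe] at hlin
  have hsingle (a a' : A) (i : ι) :
      lTensor (ι → K) (mul' K A) (TensorProduct.assoc K (ι → K) A A (rTensor A χ
        ((TensorProduct.assoc K A (ι → K) A).symm (a ⊗ₜ[K] χ (a' ⊗ₜ[K] Pi.single i 1))))) =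
      ∑ p, Pi.single p 1 ⊗ₜ ∑ q, γ q p a * γ i q a' := by
    simp only [hχ.apply_tmul_single, tmul_sum, map_sum, assoc_symm_tmul, rTensor_tmul, sum_tmul,
      assoc_tmul, lTensor_tmul, mul'_apply]
    exact Finset.sum_comm
  simp only [hlin, hsingle]
  simp only [hχ.apply_tmul_single, sum_single_tmul_injective.eq_iff, funext_iff]
  exact ⟨fun h i j a b => h a b j i, fun h a b j i => h i j a b⟩

theorem tmul_mul_iff (hχ : HasComponents χ γ) :
    (∀ (a : A) (b b' : ι → K), χ (a ⊗ₜ[K] (b * b')) =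
      rTensor A (mul' K (ι → K))
        ((TensorProduct.assoc K (ι → K) (ι → K) A).symm
          (lTensor (ι → K) χ (TensorProduct.assoc K (ι → K) A (ι → K) (χ (a ⊗ₜ[K] b) ⊗ₜ[K] b'))))) ↔
    ∀ i j p a, γ i p (γ j p a) = if i = j then γ i p a else 0 := by
  have hlin := fun a : A => forall_eq_iff_forall_single₂
    ((LinearMap.mul K (ι → K)).compr₂ (χ ∘ₗ TensorProduct.mk K A _ a))
    ((TensorProduct.mk K ((ι → K) ⊗[K] A) (ι → K)).compr₂
      (rTensor A (mul' K (ι → K)) ∘ₗ (TensorProduct.assoc K (ι → K) (ι → K) A).symm.toLinearMap ∘ₗ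
        lTensor (ι → K) χ ∘ₗ (TensorProduct.assoc K (ι → K) A (ι → K)).toLinearMap) ∘ₗ
      χ ∘ₗ TensorProduct.mk K A _ a)
  simp only [compr₂_apply, mul_apply', coe_comp, Function.comp_apply, mk_apply,
    LinearEquiv.coe_coe] at hlin
  have hleft (a : A) (i j : ι) : χ (a ⊗ₜ[K] (Pi.single i 1 * Pi.single j 1)) =
      ∑ p, Pi.single p 1 ⊗ₜ if i = j then γ i p a else 0 := by
    rw [single_one_mul_single_one]
    split_ifs <;> simp [hχ.apply_tmul_single]
  have hright (a : A) (i j : ι) :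
      rTensor A (mul' K (ι → K)) ((TensorProduct.assoc K (ι → K) (ι → K) A).symm
        (lTensor (ι → K) χ (TensorProduct.assoc K (ι → K) A (ι → K)
          (χ (a ⊗ₜ[K] Pi.single i 1) ⊗ₜ[K] Pi.single j 1)))) =
      ∑ p, Pi.single p 1 ⊗ₜ γ j p (γ i p a) := by
    simp only [hχ.apply_tmul_single, sum_tmul, map_sum, assoc_tmul, lTensor_tmul, tmul_sum,
      assoc_symm_tmul, rTensor_tmul, mul'_apply, single_one_mul_single_one, ite_tmul,
      Finset.sum_ite_eq, Finset.mem_univ, if_true]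
  simp only [hlin, hleft, hright, sum_single_tmul_injective.eq_iff, funext_iff]
  constructor
  · intro h i j p a
    rw [← h a j i p]
    by_cases hij : i = j <;> simp [hij, eq_comm]
  · intro h a i j p
    rw [h j i p a]
    by_cases hij : i = j <;> simp [hij, eq_comm]

end HasComponents

end

theorem twisting_with_Kn {A : Type*} [Field K] [Ring A] [Algebra K A] {n : ℕ}
    (χ : A ⊗[K] (Fin n → K) →ₗ[K] (Fin n → K) ⊗[K] A)
    (γ : Fin n → Fin n → (A →ₗ[K] A))
    (hχ : ∀ (a : A) (i : Fin n),
      χ (a ⊗ₜ[K] Pi.single i (1 : K)) =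
        ∑ j : Fin n, (Pi.single j (1 : K) : Fin n → K) ⊗ₜ[K] γ i j a) :
    IsTwistingMap K χ ↔
      ((∀ (i j p : Fin n) (a : A), γ i p (γ j p a) = if i = j then γ i p a else 0) ∧
       (∀ (i : Fin n) (a : A), ∑ j : Fin n, γ j i a = a) ∧
       (∀ (i j : Fin n) (a b : A), γ j i (a * b) = ∑ p : Fin n, γ p i a * γ j p b) ∧
       (∀ i j : Fin n, γ j i (1 : A) = if i = j then 1 else 0)) := by
  have hγ : HasComponents χ γ := hχ
  rw [IsTwistingMap, hγ.one_tmul_iff, hγ.tmul_one_iff, hγ.mul_tmul_iff, hγ.tmul_mul_iff]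
  tauto
end

section
/- Let D = B × C with B, C finite-dimensional, and let ψ : A⊗D → D⊗A be a twisting map. If Θ := (p_B⊗id_A)∘ψ∘(id_A⊗i_B) is a twisting map of A with B, then ψ(A⊗C) ⊆ C⊗A, where C is identified with 0×C inside D. -/
open TensorProduct LinearMap

variable (K : Type*)

/-! The unit axioms of ψ and Θ give ψ(a ⊗ (1,0)) and ψ(a ⊗ 1) the same B-component, so
ψ(a ⊗ (0,1)) lies in C ⊗ A by exactness of C ⊗ A → D ⊗ A → B ⊗ A. Writing (0,c) = (0,1)(0,c),
the multiplicativity axiom of ψ in its second variable expresses ψ(a ⊗ (0,c)) as a sum of terms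
(0,c') · d ⊗ a', and left multiplication by (0,c') maps D into 0 × C. -/

section

variable {R : Type*} [CommRing R]

theorem mem_range_rTensor_inr_of_rTensor_fst_eq_zero {M N P : Type*}
    [AddCommGroup M] [AddCommGroup N] [AddCommGroup P] [Module R M] [Module R N] [Module R P]
    {x : (M × N) ⊗[R] P} (hx : rTensor P (fst R M N) x = 0) :
    x ∈ range (rTensor P (inr R M N)) :=
  (rTensor_exact P Function.Exact.inr_fst Prod.fst_surjective x).mp hx

variable {A B C : Type*} [AddCommGroup A] [Module R A] [Ring B] [Ring C] [Algebra R B]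
  [Algebra R C]

theorem mulLeft_zero_prod (c : C) :
    mulLeft R ((0, c) : B × C) = inr R B C ∘ₗ mulLeft R c ∘ₗ snd R B C := by
  ext d <;> simp

theorem rTensor_mulLeft_zero_prod_mem_range (c : C) (z : (B × C) ⊗[R] A) :
    rTensor A (mulLeft R ((0, c) : B × C)) z ∈ range (rTensor A (inr R B C)) := by
  rw [mulLeft_zero_prod, rTensor_comp, comp_apply]
  exact mem_range_self _ _

theorem rTensor_mul'_assoc_symm_tmul {D : Type*} [Ring D] [Algebra R D] (d : D)
    (z : D ⊗[R] A) :
    rTensor A (mul' R D) ((TensorProduct.assoc R D D A).symm (d ⊗ₜ z)) =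
      rTensor A (mulLeft R d) z := by
  induction z using TensorProduct.induction_on with
  | zero => simp
  | tmul d' a => simp
  | add z z' hz hz' => simp only [tmul_add, map_add, hz, hz']

theorem apply_tmul_zero_one_mem_range_rTensor_inr
    (ψ : A ⊗[R] (B × C) →ₗ[R] (B × C) ⊗[R] A) (a : A)
    (hu : ψ (a ⊗ₜ[R] (1 : B × C)) = (1 : B × C) ⊗ₜ[R] a)
    (hΘu : rTensor A (fst R B C) (ψ (a ⊗ₜ[R] inl R B C 1)) = (1 : B) ⊗ₜ[R] a) :
    ψ (a ⊗ₜ[R] ((0, 1) : B × C)) ∈ range (rTensor A (inr R B C)) := by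
  apply mem_range_rTensor_inr_of_rTensor_fst_eq_zero
  have hsplit : ((0, 1) : B × C) = 1 - inl R B C 1 := by simp [Prod.ext_iff]
  rw [hsplit, tmul_sub, map_sub, map_sub, hu, hΘu]
  simp

theorem rTensor_mul'_twist_rTensor_inr_mem_range
    (ψ : A ⊗[R] (B × C) →ₗ[R] (B × C) ⊗[R] A) (x : C ⊗[R] A) (d : B × C) :
    rTensor A (mul' R (B × C))
        ((TensorProduct.assoc R (B × C) (B × C) A).symm
          (lTensor (B × C) ψ
            (TensorProduct.assoc R (B × C) A (B × C) (rTensor A (inr R B C) x ⊗ₜ[R] d)))) ∈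
      range (rTensor A (inr R B C)) := by
  induction x using TensorProduct.induction_on with
  | zero => simp
  | tmul c a =>
    simp only [rTensor_tmul, coe_inr, TensorProduct.assoc_tmul, lTensor_tmul,
      rTensor_mul'_assoc_symm_tmul]
    exact rTensor_mulLeft_zero_prod_mem_range c _
  | add x x' hx hx' =>
    simp only [map_add, add_tmul]
    exact add_mem hx hx'

end

theorem extension_maps_into_C {A B C : Type*} [Field K] [Ring A] [Ring B] [Ring C]
    [Algebra K A] [Algebra K B] [Algebra K C]
    (ψ : A ⊗[K] (B × C) →ₗ[K] (B × C) ⊗[K] A)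
    (hψ : IsTwistingMap K ψ)
    (hΘ : IsTwistingMap K
      (rTensor A (LinearMap.fst K B C) ∘ₗ ψ ∘ₗ lTensor A (LinearMap.inl K B C))) :
    ∀ (a : A) (c : C),
      ψ (a ⊗ₜ[K] ((0, c) : B × C)) ∈
        LinearMap.range (rTensor A (LinearMap.inr K B C)) := by
  intro a c
  obtain ⟨x, hx⟩ := apply_tmul_zero_one_mem_range_rTensor_inr ψ a (hψ.2.1 a) (hΘ.2.1 a)
  have hfactor : ((0, c) : B × C) = (0, 1) * (0, c) := by simp
  rw [hfactor, hψ.2.2.2, ← hx]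
  exact rTensor_mul'_twist_rTensor_inr_mem_range ψ x _
end

section
/- Let D = B×C with B, C finite-dimensional, and let ψ : A⊗D → D⊗A be a map such that both Θ := (p_B⊗id_A)∘ψ∘(id_A⊗i_B) : A⊗B → B⊗A and Υ := (p_C⊗id_A)∘ψ∘(id_A⊗i_C) : A⊗C → C⊗A are twisting maps. Then ψ is a twisting map if and only if ψ = Θ ⊕ Υ, i.e., ψ(a⊗(b,c)) = (i_B⊗id_A)(Θ(a⊗b)) + (i_C⊗id_A)(Υ(a⊗c)) for all a∈A, b∈B, c∈C. -/
open TensorProduct LinearMap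

variable (K : Type*)

/-!
The multiplicativity axioms of a twisting map `χ : A ⊗ D → D ⊗ A` read
`χ(a a' ⊗ d) = L_a (χ(a' ⊗ d))` and `χ(a ⊗ d d') = R_d' (χ(a ⊗ d))` for linear operators
`L_a = twistLeftMul χ a` and `R_d' = twistRightMul χ d'` on `D ⊗ A`. For `ψ = Θ ⊕ Υ` these
operators commute with the inclusions of `B ⊗ A` and `C ⊗ A` into `(B × C) ⊗ A`, so every axiom for
`ψ` splits into the corresponding axioms for `Θ` and `Υ`.

Conversely, if `ψ` is twisting, comparing the unit axioms of `ψ`, `Θ` and `Υ` gives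
`ψ(x ⊗ e) = e ⊗ x` for the idempotents `e = (1, 0), (0, 1)`. Hence `R_e` is right multiplication
by `e` on the first factor, and the fourth axiom with `d' = e` shows that `ψ` maps `A ⊗ B` into
`B ⊗ A` and `A ⊗ C` into `C ⊗ A`, which is `ψ = Θ ⊕ Υ`.
-/

section TwistedMultiplication

variable {R : Type*} [CommSemiring R]

/-- For an algebra `M`, left multiplication by `1 ⊗ a` in the twisted tensor product `M ⊗_χ A`. -/
noncomputable def twistLeftMul {A M : Type*} [Semiring A] [Algebra R A] [AddCommMonoid M]
    [Module R M] (χ : A ⊗[R] M →ₗ[R] M ⊗[R] A) (a : A) : M ⊗[R] A →ₗ[R] M ⊗[R] A :=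
  lTensor M (mul' R A) ∘ₗ (TensorProduct.assoc R M A A).toLinearMap ∘ₗ rTensor A χ ∘ₗ
    (TensorProduct.assoc R A M A).symm.toLinearMap ∘ₗ TensorProduct.mk R A (M ⊗[R] A) a

/-- Right multiplication by `b ⊗ 1` in the twisted tensor product `B ⊗_χ A`. -/
noncomputable def twistRightMul {A B : Type*} [AddCommMonoid A] [Module R A] [Semiring B]
    [Algebra R B] (χ : A ⊗[R] B →ₗ[R] B ⊗[R] A) (b : B) : B ⊗[R] A →ₗ[R] B ⊗[R] A :=
  rTensor A (mul' R B) ∘ₗ (TensorProduct.assoc R B B A).symm.toLinearMap ∘ₗ lTensor B χ ∘ₗ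
    (TensorProduct.assoc R B A B).toLinearMap ∘ₗ (TensorProduct.mk R (B ⊗[R] A) B).flip b

lemma twistLeftMul_tmul {A M : Type*} [Semiring A] [Algebra R A] [AddCommMonoid M]
    [Module R M] (χ : A ⊗[R] M →ₗ[R] M ⊗[R] A) (a : A) (m : M) (x : A) :
    twistLeftMul χ a (m ⊗ₜ x) = lTensor M (mulRight R x) (χ (a ⊗ₜ m)) := by
  simp only [twistLeftMul, coe_comp, Function.comp_apply, LinearEquiv.coe_coe, mk_apply,
    assoc_symm_tmul, rTensor_tmul]
  induction χ (a ⊗ₜ m) using TensorProduct.induction_on with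
  | zero => simp
  | tmul n y => simp
  | add Z₁ Z₂ h₁ h₂ => simp only [add_tmul, map_add, h₁, h₂]

lemma twistRightMul_tmul {A B : Type*} [AddCommMonoid A] [Module R A] [Semiring B]
    [Algebra R B] (χ : A ⊗[R] B →ₗ[R] B ⊗[R] A) (b' b : B) (x : A) :
    twistRightMul χ b' (b ⊗ₜ x) = rTensor A (mulLeft R b) (χ (x ⊗ₜ b')) := by
  simp only [twistRightMul, coe_comp, Function.comp_apply, LinearEquiv.coe_coe, flip_apply,
    mk_apply, assoc_tmul, lTensor_tmul]
  induction χ (x ⊗ₜ b') using TensorProduct.induction_on with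
  | zero => simp
  | tmul n y => simp
  | add Z₁ Z₂ h₁ h₂ => simp only [tmul_add, map_add, h₁, h₂]

lemma twistLeftMul_comp_rTensor {A M N : Type*} [Semiring A] [Algebra R A] [AddCommMonoid M]
    [Module R M] [AddCommMonoid N] [Module R N] {χ : A ⊗[R] M →ₗ[R] M ⊗[R] A}
    {θ : A ⊗[R] N →ₗ[R] N ⊗[R] A} {f : N →ₗ[R] M}
    (h : χ ∘ₗ lTensor A f = rTensor A f ∘ₗ θ) (a : A) :
    twistLeftMul χ a ∘ₗ rTensor A f = rTensor A f ∘ₗ twistLeftMul θ a := by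
  refine TensorProduct.ext' fun n x => ?_
  have hn : χ (a ⊗ₜ f n) = rTensor A f (θ (a ⊗ₜ n)) := congr($h (a ⊗ₜ n))
  rw [comp_apply, comp_apply, rTensor_tmul, twistLeftMul_tmul, twistLeftMul_tmul, hn,
    ← comp_apply (lTensor M _), ← comp_apply (rTensor A f), lTensor_comp_rTensor,
    rTensor_comp_lTensor]

lemma twistRightMul_eq_rTensor_mulRight {A B : Type*} [AddCommMonoid A] [Module R A]
    [Semiring B] [Algebra R B] {χ : A ⊗[R] B →ₗ[R] B ⊗[R] A} {e : B}
    (he : ∀ x, χ (x ⊗ₜ e) = e ⊗ₜ x) : twistRightMul χ e = rTensor A (mulRight R e) :=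
  TensorProduct.ext' fun b x => by simp [twistRightMul_tmul, he]

end TwistedMultiplication

section ProdTwist

variable {R A B C : Type*} [CommSemiring R] [AddCommMonoid A] [Module R A]
  [AddCommMonoid B] [Module R B] [AddCommMonoid C] [Module R C]

/-- The direct sum `Θ ⊕ Υ`. -/
noncomputable def prodTwist (θ : A ⊗[R] B →ₗ[R] B ⊗[R] A) (υ : A ⊗[R] C →ₗ[R] C ⊗[R] A) :
    A ⊗[R] (B × C) →ₗ[R] (B × C) ⊗[R] A :=
  rTensor A (inl R B C) ∘ₗ θ ∘ₗ lTensor A (fst R B C) +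
    rTensor A (inr R B C) ∘ₗ υ ∘ₗ lTensor A (snd R B C)

def twistFst (ψ : A ⊗[R] (B × C) →ₗ[R] (B × C) ⊗[R] A) : A ⊗[R] B →ₗ[R] B ⊗[R] A :=
  rTensor A (fst R B C) ∘ₗ ψ ∘ₗ lTensor A (inl R B C)

def twistSnd (ψ : A ⊗[R] (B × C) →ₗ[R] (B × C) ⊗[R] A) : A ⊗[R] C →ₗ[R] C ⊗[R] A :=
  rTensor A (snd R B C) ∘ₗ ψ ∘ₗ lTensor A (inr R B C)

variable (θ : A ⊗[R] B →ₗ[R] B ⊗[R] A) (υ : A ⊗[R] C →ₗ[R] C ⊗[R] A)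

@[simp]
lemma prodTwist_tmul (a : A) (b : B) (c : C) :
    prodTwist θ υ (a ⊗ₜ (b, c)) =
      rTensor A (inl R B C) (θ (a ⊗ₜ b)) + rTensor A (inr R B C) (υ (a ⊗ₜ c)) :=
  rfl

lemma prodTwist_comp_lTensor_inl :
    prodTwist θ υ ∘ₗ lTensor A (inl R B C) = rTensor A (inl R B C) ∘ₗ θ :=
  TensorProduct.ext' fun a b => by simp

lemma prodTwist_comp_lTensor_inr :
    prodTwist θ υ ∘ₗ lTensor A (inr R B C) = rTensor A (inr R B C) ∘ₗ υ :=
  TensorProduct.ext' fun a c => by simp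

lemma rTensor_inl_fst_add_rTensor_inr_snd (X : (B × C) ⊗[R] A) :
    rTensor A (inl R B C) (rTensor A (fst R B C) X) +
      rTensor A (inr R B C) (rTensor A (snd R B C) X) = X := by
  induction X using TensorProduct.induction_on with
  | zero => simp
  | tmul p x => simp [← add_tmul]
  | add X Y hX hY => rw [map_add, map_add, map_add, map_add, add_add_add_comm, hX, hY]

end ProdTwist

section ProdAlgebra

variable {R A B C : Type*} [CommSemiring R] [AddCommMonoid A] [Module R A]
  [Semiring B] [Algebra R B] [Semiring C] [Algebra R C]
  (θ : A ⊗[R] B →ₗ[R] B ⊗[R] A) (υ : A ⊗[R] C →ₗ[R] C ⊗[R] A)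

lemma twistRightMul_prodTwist_comp_rTensor_inl (b' : B) (c' : C) :
    twistRightMul (prodTwist θ υ) (b', c') ∘ₗ rTensor A (inl R B C) =
      rTensor A (inl R B C) ∘ₗ twistRightMul θ b' := by
  refine TensorProduct.ext' fun b x => ?_
  have hinl : mulLeft R ((b, 0) : B × C) ∘ₗ inl R B C = inl R B C ∘ₗ mulLeft R b := by
    ext <;> simp
  have hinr : mulLeft R ((b, 0) : B × C) ∘ₗ inr R B C = 0 := by
    ext <;> simp
  simp only [comp_apply, rTensor_tmul, inl_apply, twistRightMul_tmul, prodTwist_tmul, map_add,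
    ← rTensor_comp_apply, hinl, hinr, rTensor_zero, LinearMap.zero_apply, add_zero]

lemma twistRightMul_prodTwist_comp_rTensor_inr (b' : B) (c' : C) :
    twistRightMul (prodTwist θ υ) (b', c') ∘ₗ rTensor A (inr R B C) =
      rTensor A (inr R B C) ∘ₗ twistRightMul υ c' := by
  refine TensorProduct.ext' fun c x => ?_
  have hinl : mulLeft R ((0, c) : B × C) ∘ₗ inl R B C = 0 := by
    ext <;> simp
  have hinr : mulLeft R ((0, c) : B × C) ∘ₗ inr R B C = inr R B C ∘ₗ mulLeft R c := by
    ext <;> simp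
  simp only [comp_apply, rTensor_tmul, inr_apply, twistRightMul_tmul, prodTwist_tmul, map_add,
    ← rTensor_comp_apply, hinl, hinr, rTensor_zero, LinearMap.zero_apply, zero_add]

end ProdAlgebra

section Twisting

variable {K} {A B C : Type*} [Field K] [Ring A] [Ring B] [Ring C]
  [Algebra K A] [Algebra K B] [Algebra K C]

lemma isTwistingMap_iff (χ : A ⊗[K] B →ₗ[K] B ⊗[K] A) :
    IsTwistingMap K χ ↔
      (∀ b : B, χ ((1 : A) ⊗ₜ b) = b ⊗ₜ (1 : A)) ∧
      (∀ a : A, χ (a ⊗ₜ (1 : B)) = (1 : B) ⊗ₜ a) ∧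
      (∀ (a a' : A) (b : B), χ ((a * a') ⊗ₜ b) = twistLeftMul χ a (χ (a' ⊗ₜ b))) ∧
      (∀ (a : A) (b b' : B), χ (a ⊗ₜ (b * b')) = twistRightMul χ b' (χ (a ⊗ₜ b))) :=
  Iff.rfl

theorem isTwistingMap_prodTwist {θ : A ⊗[K] B →ₗ[K] B ⊗[K] A} {υ : A ⊗[K] C →ₗ[K] C ⊗[K] A}
    (hθ : IsTwistingMap K θ) (hυ : IsTwistingMap K υ) : IsTwistingMap K (prodTwist θ υ) := by
  obtain ⟨hθ₁, hθ₂, hθ₃, hθ₄⟩ := (isTwistingMap_iff θ).1 hθ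
  obtain ⟨hυ₁, hυ₂, hυ₃, hυ₄⟩ := (isTwistingMap_iff υ).1 hυ
  refine (isTwistingMap_iff _).2 ⟨?_, ?_, ?_, ?_⟩
  · rintro ⟨b, c⟩
    simp [hθ₁, hυ₁, ← add_tmul]
  · intro a
    simp [Prod.one_eq_mk, hθ₂, hυ₂, ← add_tmul]
  · rintro a a' ⟨b, c⟩
    rw [prodTwist_tmul, prodTwist_tmul, map_add, hθ₃, hυ₃,
      ← comp_apply (twistLeftMul (prodTwist θ υ) a), ← comp_apply (twistLeftMul (prodTwist θ υ) a),
      twistLeftMul_comp_rTensor (prodTwist_comp_lTensor_inl θ υ),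
      twistLeftMul_comp_rTensor (prodTwist_comp_lTensor_inr θ υ), comp_apply, comp_apply]
  · rintro a ⟨b, c⟩ ⟨b', c'⟩
    rw [Prod.mk_mul_mk, prodTwist_tmul, prodTwist_tmul, map_add, hθ₄, hυ₄,
      ← comp_apply (twistRightMul (prodTwist θ υ) (b', c')),
      ← comp_apply (twistRightMul (prodTwist θ υ) (b', c')),
      twistRightMul_prodTwist_comp_rTensor_inl, twistRightMul_prodTwist_comp_rTensor_inr,
      comp_apply, comp_apply]

lemma IsTwistingMap.apply_tmul_mul_eq_rTensor_mulRight {χ : A ⊗[K] B →ₗ[K] B ⊗[K] A}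
    (hχ : IsTwistingMap K χ) {e : B} (he : ∀ x, χ (x ⊗ₜ e) = e ⊗ₜ x) (a : A) (b : B) :
    χ (a ⊗ₜ (b * e)) = rTensor A (mulRight K e) (χ (a ⊗ₜ b)) := by
  rw [((isTwistingMap_iff χ).1 hχ).2.2.2, twistRightMul_eq_rTensor_mulRight he]

lemma apply_tmul_one_zero_and_zero_one (ψ : A ⊗[K] (B × C) →ₗ[K] (B × C) ⊗[K] A)
    (hψ : ∀ x, ψ (x ⊗ₜ 1) = 1 ⊗ₜ x) (hθ : ∀ x, twistFst ψ (x ⊗ₜ 1) = 1 ⊗ₜ x)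
    (hυ : ∀ x, twistSnd ψ (x ⊗ₜ 1) = 1 ⊗ₜ x) :
    (∀ x, ψ (x ⊗ₜ (1, 0)) = (1, 0) ⊗ₜ x) ∧ (∀ x, ψ (x ⊗ₜ (0, 1)) = (0, 1) ⊗ₜ x) := by
  simp only [twistFst, twistSnd, coe_comp, Function.comp_apply, lTensor_tmul, inl_apply,
    inr_apply] at hθ hυ
  have hsum x : ψ (x ⊗ₜ (1, 0)) + ψ (x ⊗ₜ (0, 1)) = 1 ⊗ₜ x := by
    rw [← map_add, ← tmul_add, Prod.mk_add_mk, add_zero, zero_add, Prod.mk_one_one, hψ]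
  have hsnd x : rTensor A (snd K B C) (ψ (x ⊗ₜ (1, 0))) = 0 := by
    simpa [hυ] using congr(rTensor A (snd K B C) $(hsum x))
  have hfst x : rTensor A (fst K B C) (ψ (x ⊗ₜ (0, 1))) = 0 := by
    simpa [hθ] using congr(rTensor A (fst K B C) $(hsum x))
  constructor
  · intro x
    conv_lhs => rw [← rTensor_inl_fst_add_rTensor_inr_snd (ψ (x ⊗ₜ (1, 0)))]
    simp [hθ, hsnd]
  · intro x
    conv_lhs => rw [← rTensor_inl_fst_add_rTensor_inr_snd (ψ (x ⊗ₜ (0, 1)))]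
    simp [hυ, hfst]

theorem IsTwistingMap.eq_prodTwist {ψ : A ⊗[K] (B × C) →ₗ[K] (B × C) ⊗[K] A}
    (hψ : IsTwistingMap K ψ) (hθ : ∀ x, twistFst ψ (x ⊗ₜ 1) = 1 ⊗ₜ x)
    (hυ : ∀ x, twistSnd ψ (x ⊗ₜ 1) = 1 ⊗ₜ x) : ψ = prodTwist (twistFst ψ) (twistSnd ψ) := by
  obtain ⟨he, hf⟩ := apply_tmul_one_zero_and_zero_one ψ hψ.2.1 hθ hυ
  have hB (a : A) (b : B) : ψ (a ⊗ₜ (b, 0)) = rTensor A (inl K B C) (twistFst ψ (a ⊗ₜ b)) := by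
    have hmul : mulRight K ((1, 0) : B × C) = inl K B C ∘ₗ fst K B C := by
      ext <;> simp
    simpa [hmul, twistFst, rTensor_comp_apply] using
      hψ.apply_tmul_mul_eq_rTensor_mulRight he a (b, 0)
  have hC (a : A) (c : C) : ψ (a ⊗ₜ (0, c)) = rTensor A (inr K B C) (twistSnd ψ (a ⊗ₜ c)) := by
    have hmul : mulRight K ((0, 1) : B × C) = inr K B C ∘ₗ snd K B C := by
      ext <;> simp
    simpa [hmul, twistSnd, rTensor_comp_apply] using
      hψ.apply_tmul_mul_eq_rTensor_mulRight hf a (0, c)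
  refine TensorProduct.ext' fun a ⟨b, c⟩ => ?_
  rw [prodTwist_tmul, ← hB, ← hC, ← map_add, ← tmul_add, Prod.mk_add_mk, add_zero, zero_add]

end Twisting

theorem twisting_iff_direct_sum {A B C : Type*} [Field K] [Ring A] [Ring B] [Ring C]
    [Algebra K A] [Algebra K B] [Algebra K C]
    (ψ : A ⊗[K] (B × C) →ₗ[K] (B × C) ⊗[K] A)
    (hΘ : IsTwistingMap K
      (rTensor A (LinearMap.fst K B C) ∘ₗ ψ ∘ₗ lTensor A (LinearMap.inl K B C)))
    (hΥ : IsTwistingMap K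
      (rTensor A (LinearMap.snd K B C) ∘ₗ ψ ∘ₗ lTensor A (LinearMap.inr K B C))) :
    IsTwistingMap K ψ ↔
      ∀ (a : A) (b : B) (c : C),
        ψ (a ⊗ₜ[K] ((b, c) : B × C)) =
          rTensor A (LinearMap.inl K B C)
              ((rTensor A (LinearMap.fst K B C) ∘ₗ ψ ∘ₗ lTensor A (LinearMap.inl K B C))
                (a ⊗ₜ[K] b)) +
            rTensor A (LinearMap.inr K B C)
              ((rTensor A (LinearMap.snd K B C) ∘ₗ ψ ∘ₗ lTensor A (LinearMap.inr K B C))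
                (a ⊗ₜ[K] c)) := by
  constructor
  · intro hψ a b c
    exact congr($(hψ.eq_prodTwist hΘ.2.1 hΥ.2.1) (a ⊗ₜ (b, c)))
  · intro h
    have hψ : ψ = prodTwist (twistFst ψ) (twistSnd ψ) :=
      TensorProduct.ext' fun a ⟨b, c⟩ => h a b c
    rw [hψ]
    exact isTwistingMap_prodTwist hΘ hΥ
end

section
/- Let ψ : A⊗D → D⊗A be a twisting map where D = B×C with B, C finite-dimensional, such that Θ = (p_B⊗id_A)∘ψ∘(id_A⊗i_B) is a twisting map. Then the faithful representation φ_ψ : D⊗_ψ A → M_{n+m}(A) restricted to A (via a ↦ φ_ψ(1⊗a)) has lower block-triangular form: φ_ψ(1⊗a) = [[φ_B(a), 0],[Δ(a), φ_C(a)]], where φ_B : A → M_n(A) and φ_C : A → M_m(A) are algebra homomorphisms and Δ : A → M_{m×n}(A) satisfies Δ(aa') = Δ(a)φ_B(a') + φ_C(a)Δ(a'). -/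
open TensorProduct LinearMap

variable (K : Type*)

namespace BTRAux

variable {K A B C : Type*} [Field K] [Ring A] [Ring B] [Ring C]
  [Algebra K A] [Algebra K B] [Algebra K C] {n m : ℕ}

noncomputable def Dbasis (bB : Module.Basis (Fin n) K B) (bC : Module.Basis (Fin m) K C) :
    Module.Basis (Fin (n + m)) K (B × C) :=
  (bB.prod bC).reindex finSumFinEquiv

lemma Dbasis_castAdd (bB : Module.Basis (Fin n) K B) (bC : Module.Basis (Fin m) K C) (i : Fin n) :
    Dbasis bB bC (Fin.castAdd m i) = (bB i, 0) := by
  simp [Dbasis, Module.Basis.reindex_apply, finSumFinEquiv_symm_apply_castAdd]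

lemma Dbasis_natAdd (bB : Module.Basis (Fin n) K B) (bC : Module.Basis (Fin m) K C) (j : Fin m) :
    Dbasis bB bC (Fin.natAdd n j) = (0, bC j) := by
  simp [Dbasis, Module.Basis.reindex_apply, finSumFinEquiv_symm_apply_natAdd]

lemma Dbasis_eq_append (bB : Module.Basis (Fin n) K B) (bC : Module.Basis (Fin m) K C) :
    (Fin.append (fun i : Fin n => ((bB i, 0) : B × C))
      (fun j : Fin m => ((0, bC j) : B × C))) = ⇑(Dbasis bB bC) := by
  funext k
  refine Fin.addCases (fun i => ?_) (fun j => ?_) k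
  · rw [Fin.append_left, Dbasis_castAdd]
  · rw [Fin.append_right, Dbasis_natAdd]

lemma Dbasis_repr_castAdd (bB : Module.Basis (Fin n) K B) (bC : Module.Basis (Fin m) K C) (j : Fin n)
    (x : B × C) : (Dbasis bB bC).repr x (Fin.castAdd m j) = bB.repr x.1 j := by
  simp [Dbasis, Module.Basis.repr_reindex_apply, finSumFinEquiv_symm_apply_castAdd]

lemma Dbasis_coord_castAdd (bB : Module.Basis (Fin n) K B) (bC : Module.Basis (Fin m) K C) (j : Fin n)
    (x : B × C) : (Dbasis bB bC).coord (Fin.castAdd m j) x = bB.coord j x.1 := by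
  simp [Dbasis, Module.Basis.coord_apply, Module.Basis.repr_reindex_apply,
    finSumFinEquiv_symm_apply_castAdd]

/-- coefficient extraction map -/
noncomputable def coef (bB : Module.Basis (Fin n) K B) (bC : Module.Basis (Fin m) K C) (j : Fin (n + m)) :
    (B × C) ⊗[K] A →ₗ[K] A :=
  (TensorProduct.lid K A).toLinearMap ∘ₗ rTensor A ((Dbasis bB bC).coord j)

lemma coef_tmul (bB : Module.Basis (Fin n) K B) (bC : Module.Basis (Fin m) K C) (j : Fin (n + m))
    (x : B × C) (a : A) :
    coef bB bC j (x ⊗ₜ[K] a) = (Dbasis bB bC).coord j x • a := by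
  simp [coef]

lemma coef_basis_tmul (bB : Module.Basis (Fin n) K B) (bC : Module.Basis (Fin m) K C) (j k : Fin (n + m))
    (a : A) : coef bB bC j (Dbasis bB bC k ⊗ₜ[K] a) = if k = j then a else 0 := by
  rw [coef_tmul, Module.Basis.coord_apply, Module.Basis.repr_self, Finsupp.single_apply]
  split <;> simp

lemma expand (bB : Module.Basis (Fin n) K B) (bC : Module.Basis (Fin m) K C) (t : (B × C) ⊗[K] A) :
    t = ∑ k : Fin (n + m), Dbasis bB bC k ⊗ₜ[K] coef bB bC k t := by
  induction t with
  | zero => simp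
  | tmul x a =>
    conv_lhs => rw [← (Dbasis bB bC).sum_repr x]
    rw [sum_tmul]
    refine Finset.sum_congr rfl fun k _ => ?_
    rw [coef_tmul, smul_tmul, ← Module.Basis.coord_apply]
  | add t₁ t₂ h₁ h₂ =>
    simp only [map_add, tmul_add, Finset.sum_add_distrib]
    rw [← h₁, ← h₂]

end BTRAux

set_option maxHeartbeats 1000000 in
set_option synthInstance.maxHeartbeats 400000 in
theorem block_triangular_representation {A B C : Type*} [Field K] [Ring A] [Ring B] [Ring C]
    [Algebra K A] [Algebra K B] [Algebra K C] {n m : ℕ}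
    (bB : Module.Basis (Fin n) K B) (bC : Module.Basis (Fin m) K C)
    (ψ : A ⊗[K] (B × C) →ₗ[K] (B × C) ⊗[K] A)
    (hψtw : IsTwistingMap K ψ)
    (hΘ : IsTwistingMap K
      (rTensor A (LinearMap.fst K B C) ∘ₗ ψ ∘ₗ lTensor A (LinearMap.inl K B C)))
    (tγ : Fin (n + m) → Fin (n + m) → (A →ₗ[K] A))
    (hψ : ∀ (a : A) (i : Fin (n + m)),
      ψ (a ⊗ₜ[K] Fin.append (fun i : Fin n => ((bB i, 0) : B × C))
          (fun j : Fin m => ((0, bC j) : B × C)) i) =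
        ∑ j : Fin (n + m),
          (Fin.append (fun i : Fin n => ((bB i, 0) : B × C))
            (fun j : Fin m => ((0, bC j) : B × C)) j) ⊗ₜ[K] tγ i j a) :
    -- the upper right block vanishes
    (∀ (a : A) (j : Fin n) (i : Fin m), tγ (Fin.natAdd n i) (Fin.castAdd m j) a = 0) ∧
    -- φ_B is an algebra morphism
    ((Matrix.of fun j i : Fin n => tγ (Fin.castAdd m i) (Fin.castAdd m j) (1 : A)) = 1 ∧
      ∀ a a' : A,
        (Matrix.of fun j i : Fin n => tγ (Fin.castAdd m i) (Fin.castAdd m j) (a * a')) =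
          (Matrix.of fun j i : Fin n => tγ (Fin.castAdd m i) (Fin.castAdd m j) a) *
            (Matrix.of fun j i : Fin n => tγ (Fin.castAdd m i) (Fin.castAdd m j) a')) ∧
    -- φ_C is an algebra morphism
    ((Matrix.of fun j i : Fin m => tγ (Fin.natAdd n i) (Fin.natAdd n j) (1 : A)) = 1 ∧
      ∀ a a' : A,
        (Matrix.of fun j i : Fin m => tγ (Fin.natAdd n i) (Fin.natAdd n j) (a * a')) =
          (Matrix.of fun j i : Fin m => tγ (Fin.natAdd n i) (Fin.natAdd n j) a) *
            (Matrix.of fun j i : Fin m => tγ (Fin.natAdd n i) (Fin.natAdd n j) a')) ∧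
    -- Δ is a twisted derivation
    (∀ a a' : A,
      (Matrix.of fun (j : Fin m) (i : Fin n) =>
          tγ (Fin.castAdd m i) (Fin.natAdd n j) (a * a')) =
        (Matrix.of fun (j : Fin m) (i : Fin n) => tγ (Fin.castAdd m i) (Fin.natAdd n j) a) *
            (Matrix.of fun j i : Fin n => tγ (Fin.castAdd m i) (Fin.castAdd m j) a') +
          (Matrix.of fun j i : Fin m => tγ (Fin.natAdd n i) (Fin.natAdd n j) a) *
            (Matrix.of fun (j : Fin m) (i : Fin n) =>
              tγ (Fin.castAdd m i) (Fin.natAdd n j) a')) := by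
  classical
  rw [BTRAux.Dbasis_eq_append bB bC] at hψ
  set d : Fin (n + m) → B × C := ⇑(BTRAux.Dbasis bB bC) with hd
  -- coefficient extraction of ψ (a ⊗ d i)
  have hcoef : ∀ (a : A) (i j : Fin (n + m)),
      BTRAux.coef bB bC j (ψ (a ⊗ₜ[K] d i)) = tγ i j a := by
    intro a i j
    rw [hψ, map_sum]
    simp only [hd, BTRAux.coef_basis_tmul]
    simp
  -- value at 1
  have hone : ∀ i j : Fin (n + m), tγ i j (1 : A) = if i = j then 1 else 0 := by
    intro i j
    rw [← hcoef 1 i j, hψtw.1 (d i)]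
    simp only [hd, BTRAux.coef_basis_tmul]
  -- multiplicativity
  have hmul : ∀ (a a' : A) (i j : Fin (n + m)),
      tγ i j (a * a') = ∑ k : Fin (n + m), tγ k j a * tγ i k a' := by
    intro a a' i j
    have h3 := congrArg (BTRAux.coef bB bC j) (hψtw.2.2.1 a a' (d i))
    rw [hcoef] at h3
    rw [h3, hψ a' i]
    simp only [tmul_sum, map_sum, assoc_symm_tmul, rTensor_tmul, hψ a, sum_tmul,
      assoc_tmul, lTensor_tmul, mul'_apply, hd, BTRAux.coef_basis_tmul]
    simp only [← hd, hψ a, sum_tmul, map_sum, assoc_tmul, lTensor_tmul, mul'_apply]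
    simp [hd, BTRAux.coef_basis_tmul]
  -- vanishing of the upper-right block
  have hzero : ∀ (a : A) (j : Fin n) (i : Fin m),
      tγ (Fin.natAdd n i) (Fin.castAdd m j) a = 0 := by
    intro a j i
    -- step a : the B-coefficients of ψ (a ⊗ (0,1)) vanish
    have hstepa : ∀ j' : Fin n,
        BTRAux.coef bB bC (Fin.castAdd m j') (ψ (a ⊗ₜ[K] ((0, 1) : B × C))) = 0 := by
      intro j'
      have hsplit : ((0, 1) : B × C) = (1 : B × C) - ((1, 0) : B × C) := by
        simp [Prod.ext_iff]
      have hfst : rTensor A (LinearMap.fst K B C) (ψ (a ⊗ₜ[K] ((1, 0) : B × C)))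
          = (1 : B) ⊗ₜ[K] a := by
        have h := hΘ.2.1 a
        simpa using h
      have hkey : ∀ t : (B × C) ⊗[K] A,
          BTRAux.coef bB bC (Fin.castAdd m j') t =
            (TensorProduct.lid K A) (rTensor A (bB.coord j')
              (rTensor A (LinearMap.fst K B C) t)) := by
        intro t
        rw [← LinearMap.rTensor_comp_apply]
        have hc : (bB.coord j') ∘ₗ (LinearMap.fst K B C)
            = (BTRAux.Dbasis bB bC).coord (Fin.castAdd m j') := by
          apply LinearMap.ext
          intro x
          simp [Module.Basis.coord_apply, BTRAux.Dbasis_repr_castAdd]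
        rw [hc]
        rfl
      have h1D : BTRAux.coef bB bC (Fin.castAdd m j') ((1 : B × C) ⊗ₜ[K] a)
          = bB.coord j' 1 • a := by
        rw [BTRAux.coef_tmul, BTRAux.Dbasis_coord_castAdd, Prod.fst_one]
      rw [hsplit, tmul_sub, map_sub, map_sub, hψtw.2.1 a, h1D, hkey, hfst]
      simp [Prod.fst_one]
    -- step b : fourth twisting condition with b = (0,1), b' = d (natAdd n i)
    have hprod : ((0, 1) : B × C) * d (Fin.natAdd n i) = d (Fin.natAdd n i) := by
      simp [hd, BTRAux.Dbasis_natAdd, Prod.ext_iff]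
    have h4 := congrArg (BTRAux.coef bB bC (Fin.castAdd m j))
      (hψtw.2.2.2 a ((0, 1) : B × C) (d (Fin.natAdd n i)))
    rw [hprod, hcoef] at h4
    rw [h4]
    rw [BTRAux.expand bB bC (ψ (a ⊗ₜ[K] ((0, 1) : B × C)))]
    simp only [sum_tmul, map_sum, assoc_tmul, lTensor_tmul, ← hd, hψ, tmul_sum,
      assoc_symm_tmul, rTensor_tmul, mul'_apply]
    refine Finset.sum_eq_zero fun k _ => ?_
    induction k using Fin.addCases with
    | left k₀ =>
      rw [hstepa k₀]
      simp
    | right k₀ =>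
      refine Finset.sum_eq_zero fun l _ => ?_
      simp only [hd, BTRAux.coef_tmul, BTRAux.Dbasis_coord_castAdd]
      rw [Prod.fst_mul, BTRAux.Dbasis_natAdd]
      simp
  refine ⟨hzero, ⟨?_, ?_⟩, ⟨?_, ?_⟩, ?_⟩
  · ext p q
    simp only [Matrix.of_apply, Matrix.one_apply, hone, Fin.castAdd_inj]
    simp [eq_comm]
  · intro a a'
    ext p q
    simp only [Matrix.of_apply, Matrix.mul_apply]
    rw [hmul, Fin.sum_univ_add]
    simp [hzero]
  · ext p q
    have hni : ∀ p q : Fin m, Fin.natAdd n p = Fin.natAdd n q ↔ p = q := by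
      intro p q
      simp [Fin.ext_iff]
    simp only [Matrix.of_apply, Matrix.one_apply, hone, hni]
    simp [eq_comm]
  · intro a a'
    ext p q
    simp only [Matrix.of_apply, Matrix.mul_apply]
    rw [hmul, Fin.sum_univ_add]
    simp [hzero]
  · intro a a'
    ext p q
    simp only [Matrix.of_apply, Matrix.mul_apply, Matrix.add_apply]
    rw [hmul, Fin.sum_univ_add]
end

section
/- Let χ : A⊗K³ → K³⊗A be a twisting map given by χ(a⊗e_j) = Σ_{i=1}^3 e_i⊗γ_j^i(a), and suppose the map Θ : A⊗K² → K²⊗A defined by Θ(a⊗e_j) = e_1⊗γ_j^1(a) + e_2⊗γ_j^2(a) for j ∈ {1,2} is also a twisting map. Then γ_3^1 = 0 and γ_3^2 = 0. -/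
open TensorProduct LinearMap

variable (K : Type*)

/-! Only the unit axiom `χ (a ⊗ 1) = 1 ⊗ a` is needed. Expanding `1 = ∑ j, e_j` and reading off
the `e_i`-coordinate, it says `∑ j, γ_j^i = id` for every `i`. For `χ` the sum runs over three
indices `j`, for `Θ` over the first two, so subtracting gives `γ_3^i = 0` for `i = 1, 2`. -/

theorem sum_coeff_eq_self_of_map_tmul_one {K A ι : Type*} [CommSemiring K] [AddCommMonoid A]
    [Module K A] [Fintype ι] [DecidableEq ι]
    (χ : A ⊗[K] (ι → K) →ₗ[K] (ι → K) ⊗[K] A) (γ : ι → ι → A → A)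
    (hχ : ∀ (a : A) (j : ι), χ (a ⊗ₜ[K] Pi.single j (1 : K)) =
      ∑ i, (Pi.single i (1 : K) : ι → K) ⊗ₜ[K] γ j i a)
    (a : A) (h1 : χ (a ⊗ₜ[K] (1 : ι → K)) = (1 : ι → K) ⊗ₜ[K] a) (i : ι) :
    ∑ j, γ j i a = a := by
  have hone : (1 : ι → K) = ∑ j, Pi.single j (1 : K) := (Finset.univ_sum_single 1).symm
  rw [hone, tmul_sum, map_sum] at h1
  simp_rw [hχ] at h1
  have coord_i := congrArg ((TensorProduct.lid K A).toLinearMap ∘ₗ rTensor A (proj i)) h1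
  simpa [sum_tmul, Pi.single_apply] using coord_i

theorem K3_extension_of_K2 {A : Type*} [Field K] [Ring A] [Algebra K A]
    (χ : A ⊗[K] (Fin 3 → K) →ₗ[K] (Fin 3 → K) ⊗[K] A)
    (γ : Fin 3 → Fin 3 → (A →ₗ[K] A))
    (hχ : ∀ (a : A) (j : Fin 3),
      χ (a ⊗ₜ[K] Pi.single j (1 : K)) =
        ∑ i : Fin 3, (Pi.single i (1 : K) : Fin 3 → K) ⊗ₜ[K] γ j i a)
    (hχtw : IsTwistingMap K χ)
    (Θ : A ⊗[K] (Fin 2 → K) →ₗ[K] (Fin 2 → K) ⊗[K] A)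
    (hΘ : ∀ (a : A) (j : Fin 2),
      Θ (a ⊗ₜ[K] Pi.single j (1 : K)) =
        ∑ i : Fin 2, (Pi.single i (1 : K) : Fin 2 → K) ⊗ₜ[K]
          γ (Fin.castLE (by norm_num) j) (Fin.castLE (by norm_num) i) a)
    (hΘtw : IsTwistingMap K Θ) :
    γ 2 0 = 0 ∧ γ 2 1 = 0 := by
  have last_column_eq_zero (i : Fin 2) : γ 2 (Fin.castLE (by norm_num) i) = 0 := by
    ext a
    have sum3 := sum_coeff_eq_self_of_map_tmul_one χ (fun j i ↦ γ j i) hχ a (hχtw.2.1 a)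
      (Fin.castLE (by norm_num) i)
    have sum2 := sum_coeff_eq_self_of_map_tmul_one Θ _ hΘ a (hΘtw.2.1 a) i
    rw [Fin.sum_univ_three] at sum3
    rw [Fin.sum_univ_two] at sum2
    exact add_eq_left.mp (sum3.trans sum2.symm)
  exact ⟨last_column_eq_zero 0, last_column_eq_zero 1⟩
end
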